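/- arXiv:1203.4388 — 8 statements merged into one kernel-verified Lean document; each statement's English description precedes it below -/
import Mathlib

section
/- Let θ > 0 and let d ∈ ℝ³ be a constant vector with ⟨d,d⟩ = −1 such that ⟨N(s),d⟩ = −cosh θ for all s ∈ I. Then there exists a sign ε ∈ {−1, +1} such that for every s ∈ I, d = ε·(τ_g/√(k_n² + τ_g²))·sinh θ·T(s) − ε·(k_n/√(k_n² + τ_g²))·sinh θ·B(s) + cosh θ·N(s), where k_n, τ_g are evaluated at s. -/
/-- The Lorentzian (Minkowski) inner product on `E₁³ = ℝ³`:
`⟨x,y⟩ = -x₁y₁ + x₂y₂ + x₃y₃`. -/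
noncomputable def mdot (x y : Fin 3 → ℝ) : ℝ :=
  -(x 0 * y 0) + x 1 * y 1 + x 2 * y 2

/-- Derivative of `s ↦ mdot (f s) d` for fixed `d`. -/
lemma mdot_hasDerivAt {f : ℝ → Fin 3 → ℝ} {f' : Fin 3 → ℝ} {s : ℝ} (d : Fin 3 → ℝ)
    (hf : HasDerivAt f f' s) :
    HasDerivAt (fun t => mdot (f t) d) (mdot f' d) s := by
  have h := hasDerivAt_pi.1 hf
  have : HasDerivAt (fun t => -(f t 0 * d 0) + f t 1 * d 1 + f t 2 * d 2)
      (-(f' 0 * d 0) + f' 1 * d 1 + f' 2 * d 2) s :=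
    (((h 0).mul_const (d 0)).neg.add ((h 1).mul_const (d 1))).add ((h 2).mul_const (d 2))
  simpa [mdot] using this

lemma mdot_smul_add_left (p q : ℝ) (x y z : Fin 3 → ℝ) :
    mdot (p • x + q • y) z = p * mdot x z + q * mdot y z := by
  simp only [mdot, Pi.add_apply, Pi.smul_apply, smul_eq_mul]; ring

lemma mdot_right_expand (x t bb n dd : Fin 3 → ℝ) (p q w : ℝ) :
    mdot x (dd - (p • t + q • bb + w • n)) =
      mdot x dd - p * mdot x t - q * mdot x bb - w * mdot x n := by
  simp only [mdot, Pi.sub_apply, Pi.add_apply, Pi.smul_apply, smul_eq_mul]; ring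

lemma mdot_self_expand (p q w : ℝ) (x y z : Fin 3 → ℝ) :
    mdot (p • x + q • y + w • z) (p • x + q • y + w • z) =
      p ^ 2 * mdot x x + q ^ 2 * mdot y y + w ^ 2 * mdot z z
        + 2 * p * q * mdot x y + 2 * p * w * mdot x z + 2 * q * w * mdot y z := by
  simp only [mdot, Pi.add_apply, Pi.smul_apply, smul_eq_mul]; ring

/-- A vector `mdot`-orthogonal to a pseudo-orthonormal triple is zero. -/
lemma mdot_orth_eq_zero (x y z e : Fin 3 → ℝ)
    (hxx : mdot x x = 1) (hyy : mdot y y = 1) (hzz : mdot z z = -1)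
    (hxy : mdot x y = 0) (hxz : mdot x z = 0) (hyz : mdot y z = 0)
    (hex : mdot x e = 0) (hey : mdot y e = 0) (hez : mdot z e = 0) : e = 0 := by
  simp only [mdot] at *
  set A : Matrix (Fin 3) (Fin 3) ℝ :=
    !![-(x 0), x 1, x 2; -(y 0), y 1, y 2; -(z 0), z 1, z 2] with hA
  set M : Matrix (Fin 3) (Fin 3) ℝ :=
    !![x 0, x 1, x 2; y 0, y 1, y 2; z 0, z 1, z 2] with hM
  have hMA : M * A.transpose = !![(1:ℝ),0,0; 0,1,0; 0,0,-1] := by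
    ext i j
    fin_cases i <;> fin_cases j <;>
      simp [hM, hA, Matrix.mul_apply, Matrix.transpose, Matrix.vecHead, Matrix.vecTail,
        Fin.sum_univ_three] <;> linarith
  have hdet : M.det * A.det = -1 := by
    have h := congrArg Matrix.det hMA
    rw [Matrix.det_mul, Matrix.det_transpose] at h
    rw [h]
    norm_num [Matrix.det_fin_three]
    simp [Matrix.vecHead, Matrix.vecTail]
  have hAdet : A.det ≠ 0 := by
    intro h0
    rw [h0, mul_zero] at hdet
    norm_num at hdet
  have hAe : A.mulVec e = 0 := by
    ext i
    fin_cases i <;>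
      simp [hA, Matrix.mulVec, dotProduct, Fin.sum_univ_three] <;> linarith
  exact Matrix.eq_zero_of_mulVec_eq_zero hAdet hAe

/-- If `d` is a constant timelike unit vector with `⟨N,d⟩ = −cosh θ` along the
curve, then, up to a global sign `ε`,
`d = ε·(τ_g/√(k_n²+τ_g²))·sinh θ·T − ε·(k_n/√(k_n²+τ_g²))·sinh θ·B + cosh θ·N`. -/
theorem statement4
    -- the open interval `I`
    (a b : ℝ) (hab : a < b) (I : Set ℝ) (hI : I = Set.Ioo a b)
    -- the Darboux frame `T, B, N` of a unit-speed spacelike curve on a spacelike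
    -- surface, with normal curvature `kn`, geodesic curvature `kg` and geodesic
    -- torsion `τg`
    (T B N : ℝ → Fin 3 → ℝ) (kn kg τg : ℝ → ℝ)
    (hTs : ContDiffOn ℝ (⊤ : ℕ∞) T I) (hBs : ContDiffOn ℝ (⊤ : ℕ∞) B I) (hNs : ContDiffOn ℝ (⊤ : ℕ∞) N I)
    (hkns : ContDiffOn ℝ (⊤ : ℕ∞) kn I) (hkgs : ContDiffOn ℝ (⊤ : ℕ∞) kg I)
    (hτgs : ContDiffOn ℝ (⊤ : ℕ∞) τg I)
    (hTT : ∀ s ∈ I, mdot (T s) (T s) = 1)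
    (hBB : ∀ s ∈ I, mdot (B s) (B s) = 1)
    (hNN : ∀ s ∈ I, mdot (N s) (N s) = -1)
    (hTB : ∀ s ∈ I, mdot (T s) (B s) = 0)
    (hTN : ∀ s ∈ I, mdot (T s) (N s) = 0)
    (hBN : ∀ s ∈ I, mdot (B s) (N s) = 0)
    -- the Darboux frame equations
    (hT' : ∀ s ∈ I, HasDerivAt T (kg s • B s + kn s • N s) s)
    (hB' : ∀ s ∈ I, HasDerivAt B ((-kg s) • T s + τg s • N s) s)
    (hN' : ∀ s ∈ I, HasDerivAt N (kn s • T s + τg s • B s) s)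
    -- `k_n` never vanishes on `I`
    (hkn0 : ∀ s ∈ I, kn s ≠ 0)
    -- `d` is a constant timelike unit vector making constant hyperbolic angle `θ`
    -- with the surface normal `N` along the curve
    (θ : ℝ) (hθ : 0 < θ) (d : Fin 3 → ℝ) (hdd : mdot d d = -1)
    (hNd : ∀ s ∈ I, mdot (N s) d = -Real.cosh θ)
    :
    ∃ ε : ℝ, (ε = 1 ∨ ε = -1) ∧ ∀ s ∈ I,
      d = (ε * (τg s / Real.sqrt (kn s ^ 2 + τg s ^ 2)) * Real.sinh θ) • T s
          - (ε * (kn s / Real.sqrt (kn s ^ 2 + τg s ^ 2)) * Real.sinh θ) • B s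
          + Real.cosh θ • N s := by
  have hIopen : IsOpen I := hI ▸ isOpen_Ioo
  set u : ℝ → ℝ := fun s => mdot (T s) d with hu
  set v : ℝ → ℝ := fun s => mdot (B s) d with hv
  have hsinhpos : 0 < Real.sinh θ := Real.sinh_pos_iff.2 hθ
  -- the key differential relation: kn·u + τg·v = 0 on I
  have hkey : ∀ s ∈ I, kn s * u s + τg s * v s = 0 := by
    intro s hs
    have h1 : HasDerivAt (fun t => mdot (N t) d) (mdot (kn s • T s + τg s • B s) d) s :=
      mdot_hasDerivAt d (hN' s hs)
    have h2 : HasDerivAt (fun t => mdot (N t) d) 0 s := by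
      have heq : (fun t => mdot (N t) d) =ᶠ[nhds s] fun _ => -Real.cosh θ := by
        filter_upwards [hIopen.mem_nhds hs] with t ht using hNd t ht
      exact (hasDerivAt_const s (-Real.cosh θ)).congr_of_eventuallyEq heq
    have h0 : mdot (kn s • T s + τg s • B s) d = 0 := h1.unique h2
    rw [mdot_smul_add_left] at h0
    simp only [hu, hv]
    exact h0
  -- expansion of d in the frame
  have hexp : ∀ s ∈ I, d = u s • T s + v s • B s + Real.cosh θ • N s := by
    intro s hs
    set e : Fin 3 → ℝ := d - (u s • T s + v s • B s + Real.cosh θ • N s) with he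
    have hex : mdot (T s) e = 0 := by
      rw [he, mdot_right_expand, hTT s hs]
      have h1 : mdot (T s) (B s) = 0 := hTB s hs
      have h2 : mdot (T s) (N s) = 0 := hTN s hs
      rw [h1, h2]
      simp only [hu]
      ring
    have hey : mdot (B s) e = 0 := by
      rw [he, mdot_right_expand, hBB s hs]
      have h1 : mdot (B s) (T s) = 0 := by
        have := hTB s hs; simp only [mdot] at this ⊢; linarith
      have h2 : mdot (B s) (N s) = 0 := hBN s hs
      rw [h1, h2]
      simp only [hv]
      ring
    have hez : mdot (N s) e = 0 := by
      rw [he, mdot_right_expand, hNN s hs, hNd s hs]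
      have h1 : mdot (N s) (T s) = 0 := by
        have := hTN s hs; simp only [mdot] at this ⊢; linarith
      have h2 : mdot (N s) (B s) = 0 := by
        have := hBN s hs; simp only [mdot] at this ⊢; linarith
      rw [h1, h2]
      ring
    have h0 : e = 0 :=
      mdot_orth_eq_zero (T s) (B s) (N s) e (hTT s hs) (hBB s hs) (hNN s hs)
        (hTB s hs) (hTN s hs) (hBN s hs) hex hey hez
    rw [he] at h0
    exact sub_eq_zero.mp h0
  -- |tangential part|² = sinh²θ
  have hsq : ∀ s ∈ I, u s ^ 2 + v s ^ 2 = Real.sinh θ ^ 2 := by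
    intro s hs
    have hd : mdot (u s • T s + v s • B s + Real.cosh θ • N s)
        (u s • T s + v s • B s + Real.cosh θ • N s) = -1 := by
      rw [← hexp s hs]; exact hdd
    rw [mdot_self_expand, hTT s hs, hBB s hs, hNN s hs, hTB s hs, hTN s hs, hBN s hs] at hd
    have hch : Real.cosh θ ^ 2 - Real.sinh θ ^ 2 = 1 := Real.cosh_sq_sub_sinh_sq θ
    nlinarith [hd, hch]
  -- notation for the norm of (kn, τg)
  set r : ℝ → ℝ := fun s => Real.sqrt (kn s ^ 2 + τg s ^ 2) with hr
  have hrpos : ∀ s ∈ I, 0 < r s := by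
    intro s hs
    apply Real.sqrt_pos.2
    have := hkn0 s hs
    positivity
  have hrsq : ∀ s ∈ I, r s ^ 2 = kn s ^ 2 + τg s ^ 2 := by
    intro s hs
    exact Real.sq_sqrt (by positivity)
  -- the sign function
  set E : ℝ → ℝ := fun s => (τg s * u s - kn s * v s) / (r s * Real.sinh θ) with hE
  have hEsq : ∀ s ∈ I, E s = 1 ∨ E s = -1 := by
    intro s hs
    have h1 : (τg s * u s - kn s * v s) ^ 2 = (r s * Real.sinh θ) ^ 2 := by
      have h2 := hkey s hs
      have h3 := hsq s hs
      have h4 := hrsq s hs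
      nlinarith [h2, h3, h4]
    have hden : r s * Real.sinh θ ≠ 0 := by
      have := hrpos s hs; positivity
    have hsq1 : E s ^ 2 = 1 := by
      simp only [hE, div_pow]
      rw [h1, div_self (pow_ne_zero 2 hden)]
    have : (E s - 1) * (E s + 1) = 0 := by linear_combination hsq1
    rcases mul_eq_zero.mp this with h | h
    · exact Or.inl (by linarith)
    · exact Or.inr (by linarith)
  -- E is continuous on I
  have hcomp : ∀ (f : ℝ → Fin 3 → ℝ), ContDiffOn ℝ (⊤ : ℕ∞) f I →
      ∀ i : Fin 3, ContinuousOn (fun s => f s i) I := fun f hf i =>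
    (continuous_apply i).comp_continuousOn hf.continuousOn
  have hucont : ContinuousOn u I := by
    simp only [hu, mdot]
    exact (((hcomp T hTs 0).mul continuousOn_const).neg.add
      ((hcomp T hTs 1).mul continuousOn_const)).add ((hcomp T hTs 2).mul continuousOn_const)
  have hvcont : ContinuousOn v I := by
    simp only [hv, mdot]
    exact (((hcomp B hBs 0).mul continuousOn_const).neg.add
      ((hcomp B hBs 1).mul continuousOn_const)).add ((hcomp B hBs 2).mul continuousOn_const)
  have hrcont : ContinuousOn r I := by
    apply Real.continuous_sqrt.comp_continuousOn
    exact ((hkns.continuousOn.pow 2).add (hτgs.continuousOn.pow 2))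
  have hEcont : ContinuousOn E I := by
    apply ContinuousOn.div
    · exact ((hτgs.continuousOn.mul hucont).sub (hkns.continuousOn.mul hvcont))
    · exact hrcont.mul continuousOn_const
    · intro s hs
      have := hrpos s hs
      positivity
  -- E is constant on the interval
  have hIconn : ∀ s₁ ∈ I, ∀ s₂ ∈ I, E s₁ = E s₂ := by
    intro s₁ hs₁ s₂ hs₂
    by_contra hne
    have hsub : Set.uIcc s₁ s₂ ⊆ I := by
      rw [hI] at hs₁ hs₂ ⊢
      exact Set.OrdConnected.uIcc_subset Set.ordConnected_Ioo hs₁ hs₂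
    have h0mem : (0:ℝ) ∈ Set.uIcc (E s₁) (E s₂) := by
      rcases hEsq s₁ hs₁ with h1 | h1 <;> rcases hEsq s₂ hs₂ with h2 | h2 <;>
        rw [h1, h2] at hne ⊢ <;>
          first
            | exact absurd rfl hne
            | (rw [Set.mem_uIcc]; norm_num)
    obtain ⟨s₃, hs₃, hEs₃⟩ := intermediate_value_uIcc (hEcont.mono hsub) h0mem
    rcases hEsq s₃ (hsub hs₃) with h | h <;> rw [hEs₃] at h <;> norm_num at h
  -- pick a base point
  have hs₀ : (a + b) / 2 ∈ I := by
    rw [hI]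
    constructor <;> linarith
  refine ⟨E ((a + b) / 2), hEsq _ hs₀, ?_⟩
  intro s hs
  have hEs : E s = E ((a + b) / 2) := hIconn s hs _ hs₀
  set ε := E ((a + b) / 2) with hε
  -- solve the linear system for u and v
  have hr0 : r s ≠ 0 := ne_of_gt (hrpos s hs)
  have hsinh0 : Real.sinh θ ≠ 0 := ne_of_gt hsinhpos
  have hnum : τg s * u s - kn s * v s = ε * (r s * Real.sinh θ) := by
    have h := hEs
    simp only [hE] at h
    rw [div_eq_iff (mul_ne_zero hr0 hsinh0)] at h
    exact h
  have hk := hkey s hs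
  have hP := hrsq s hs
  have h3 : u s * r s = ε * τg s * Real.sinh θ := by
    apply mul_right_cancel₀ hr0
    linear_combination τg s * hnum + kn s * hk + u s * hP
  have h4 : v s * r s = -(ε * kn s * Real.sinh θ) := by
    apply mul_right_cancel₀ hr0
    linear_combination (-(kn s)) * hnum + τg s * hk + v s * hP
  have hcu : ε * (τg s / r s) * Real.sinh θ = u s := by
    have h5 : ε * (τg s / r s) * Real.sinh θ = (ε * τg s * Real.sinh θ) / r s := by ring
    rw [h5, ← h3, mul_div_assoc, div_self hr0, mul_one]
  have hcv : ε * (kn s / r s) * Real.sinh θ = -(v s) := by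
    have h5 : ε * (kn s / r s) * Real.sinh θ = -(-(ε * kn s * Real.sinh θ) / r s) := by ring
    rw [h5, ← h4, mul_div_assoc, div_self hr0, mul_one]
  rw [hr] at hcu hcv
  rw [hcu, hcv, sub_eq_add_neg, ← neg_smul, neg_neg]
  exact hexp s hs
end

section
/- Suppose ψ is constant on I with |ψ| > 1, and choose ε ∈ {−1,+1} and θ > 0 such that ψ = −ε·coth θ. Then the map d : I → ℝ³ defined by d(s) = ε·(τ_g/√(k_n² + τ_g²))·sinh θ·T(s) − ε·(k_n/√(k_n² + τ_g²))·sinh θ·B(s) + cosh θ·N(s) satisfies d′(s) = 0 for all s ∈ I; hence d is a constant vector with ⟨d,d⟩ = −1 (a timelike unit vector) and ⟨N(s),d⟩ = −cosh θ for all s ∈ I. -/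
/-- If `ψ` is constant on `I` with `|ψ| > 1` and `ψ = −ε·coth θ` for a sign `ε` and
`θ > 0`, then the map
`d(s) = ε·(τ_g/√(k_n²+τ_g²))·sinh θ·T − ε·(k_n/√(k_n²+τ_g²))·sinh θ·B + cosh θ·N`
has vanishing derivative on `I`, hence is a constant timelike unit vector with
`⟨N,d⟩ = −cosh θ` along the curve. -/
theorem statement6
    -- the open interval `I`
    (a b : ℝ) (hab : a < b) (I : Set ℝ) (hI : I = Set.Ioo a b)
    -- the Darboux frame `T, B, N` of a unit-speed spacelike curve on a spacelike
    -- surface, with normal curvature `kn`, geodesic curvature `kg` and geodesic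
    -- torsion `τg`
    (T B N : ℝ → Fin 3 → ℝ) (kn kg τg : ℝ → ℝ)
    (hTs : ContDiffOn ℝ (⊤ : ℕ∞) T I) (hBs : ContDiffOn ℝ (⊤ : ℕ∞) B I) (hNs : ContDiffOn ℝ (⊤ : ℕ∞) N I)
    (hkns : ContDiffOn ℝ (⊤ : ℕ∞) kn I) (hkgs : ContDiffOn ℝ (⊤ : ℕ∞) kg I)
    (hτgs : ContDiffOn ℝ (⊤ : ℕ∞) τg I)
    (hTT : ∀ s ∈ I, mdot (T s) (T s) = 1)
    (hBB : ∀ s ∈ I, mdot (B s) (B s) = 1)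
    (hNN : ∀ s ∈ I, mdot (N s) (N s) = -1)
    (hTB : ∀ s ∈ I, mdot (T s) (B s) = 0)
    (hTN : ∀ s ∈ I, mdot (T s) (N s) = 0)
    (hBN : ∀ s ∈ I, mdot (B s) (N s) = 0)
    -- the Darboux frame equations
    (hT' : ∀ s ∈ I, HasDerivAt T (kg s • B s + kn s • N s) s)
    (hB' : ∀ s ∈ I, HasDerivAt B ((-kg s) • T s + τg s • N s) s)
    (hN' : ∀ s ∈ I, HasDerivAt N (kn s • T s + τg s • B s) s)
    -- `k_n` never vanishes on `I`
    (hkn0 : ∀ s ∈ I, kn s ≠ 0)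
    -- `ψ(s) = (k_n²/(k_n² + τ_g²)^{3/2})·(τ_g/k_n)′(s) + k_g(s)/(k_n² + τ_g²)^{1/2}`
    (ψ : ℝ → ℝ)
    (hψ : ∀ s ∈ I, ψ s =
      kn s ^ 2 / Real.sqrt ((kn s ^ 2 + τg s ^ 2) ^ 3) *
        deriv (fun u => τg u / kn u) s +
      kg s / Real.sqrt (kn s ^ 2 + τg s ^ 2))
    -- `ψ` is constant with `|ψ| > 1`, `ψ = −ε·coth θ`
    (c : ℝ) (hc : ∀ s ∈ I, ψ s = c) (hc1 : 1 < |c|)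
    (ε : ℝ) (hε : ε = 1 ∨ ε = -1) (θ : ℝ) (hθ : 0 < θ)
    (hεθ : c = -ε * (Real.cosh θ / Real.sinh θ))
    (d : ℝ → Fin 3 → ℝ)
    (hd : d = fun s =>
      (ε * (τg s / Real.sqrt (kn s ^ 2 + τg s ^ 2)) * Real.sinh θ) • T s
        - (ε * (kn s / Real.sqrt (kn s ^ 2 + τg s ^ 2)) * Real.sinh θ) • B s
        + Real.cosh θ • N s) :
    (∀ s ∈ I, HasDerivAt d (0 : Fin 3 → ℝ) s) ∧
    (∀ s ∈ I, ∀ t ∈ I, d s = d t) ∧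
    (∀ s ∈ I, mdot (d s) (d s) = -1) ∧
    (∀ s ∈ I, mdot (N s) (d s) = -Real.cosh θ) := by
  subst hI
  subst hd
  have hS : Real.sinh θ ≠ 0 := (Real.sinh_pos_iff.mpr hθ).ne'
  have hε2 : ε ^ 2 = 1 := by rcases hε with h | h <;> simp [h]
  have key : ∀ s ∈ Set.Ioo a b, HasDerivAt (fun s =>
      (ε * (τg s / Real.sqrt (kn s ^ 2 + τg s ^ 2)) * Real.sinh θ) • T s
        - (ε * (kn s / Real.sqrt (kn s ^ 2 + τg s ^ 2)) * Real.sinh θ) • B s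
        + Real.cosh θ • N s) (0 : Fin 3 → ℝ) s := by
    intro s hs
    have hmem : Set.Ioo a b ∈ nhds s := isOpen_Ioo.mem_nhds hs
    have hknD : HasDerivAt kn (deriv kn s) s :=
      ((hkns.contDiffAt hmem).differentiableAt (by simp)).hasDerivAt
    have hτD : HasDerivAt τg (deriv τg s) s :=
      ((hτgs.contDiffAt hmem).differentiableAt (by simp)).hasDerivAt
    set K := kn s with hKdef
    set G := τg s with hGdef
    set K' := deriv kn s with hK'def
    set G' := deriv τg s with hG'def
    have hK : K ≠ 0 := hkn0 s hs
    have hpos : (0:ℝ) < K ^ 2 + G ^ 2 := by positivity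
    set R := Real.sqrt (K ^ 2 + G ^ 2) with hRdef
    have hRpos : 0 < R := Real.sqrt_pos.mpr hpos
    have hR2 : R ^ 2 = K ^ 2 + G ^ 2 := Real.sq_sqrt hpos.le
    have hsq : HasDerivAt (fun u => kn u ^ 2 + τg u ^ 2)
        (2 * K * K' + 2 * G * G') s := by
      have h := (hknD.pow 2).add (hτD.pow 2)
      refine h.congr_deriv (Eq.symm ?_)
      push_cast
      ring
    have hroot : HasDerivAt (fun u => Real.sqrt (kn u ^ 2 + τg u ^ 2))
        (1 / (2 * R) * (2 * K * K' + 2 * G * G')) s :=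
      (Real.hasDerivAt_sqrt hpos.ne').comp s hsq
    -- the constraint from ψ being constant
    have hdiv : HasDerivAt (fun u => τg u / kn u) ((G' * K - G * K') / K ^ 2) s :=
      hτD.div hknD hK
    have hcube : Real.sqrt ((K ^ 2 + G ^ 2) ^ 3) = R ^ 3 := by
      rw [show (K ^ 2 + G ^ 2) ^ 3 = (R ^ 3) ^ 2 by rw [← hR2]; ring, Real.sqrt_sq (by positivity)]
    have hRne := hRpos.ne'
    have h := (hψ s hs).symm.trans ((hc s hs).trans hεθ)
    rw [← hKdef, ← hGdef, hcube, hdiv.deriv, ← hRdef] at h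
    have hcon2 : (G' * K - G * K') * Real.sinh θ + kg s * R ^ 2 * Real.sinh θ
        = -ε * Real.cosh θ * R ^ 3 := by
      field_simp at h
      have hne : (K ^ 2 * R : ℝ) ≠ 0 := by positivity
      apply mul_left_cancel₀ hne
      linear_combination (K ^ 2 * R) * h
    have hroot2 : HasDerivAt (fun u => Real.sqrt (kn u ^ 2 + τg u ^ 2))
        ((K * K' + G * G') / R) s := by
      refine hroot.congr_deriv (Eq.symm ?_)
      field_simp
    -- derivatives of the two coefficient functions
    have hc1 : HasDerivAt
        (fun u => ε * (τg u / Real.sqrt (kn u ^ 2 + τg u ^ 2)) * Real.sinh θ)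
        (ε * Real.sinh θ * (K * (G' * K - G * K') / R ^ 3)) s := by
      have h2 := ((hτD.div hroot2 hRpos.ne').const_mul ε).mul_const (Real.sinh θ)
      refine h2.congr_deriv (Eq.symm ?_)
      rw [← hKdef, ← hGdef, ← hRdef]
      field_simp
      linear_combination (-ε * G') * hR2
    have hc2 : HasDerivAt
        (fun u => ε * (kn u / Real.sqrt (kn u ^ 2 + τg u ^ 2)) * Real.sinh θ)
        (ε * Real.sinh θ * (-(G * (G' * K - G * K')) / R ^ 3)) s := by
      have h2 := ((hknD.div hroot2 hRpos.ne').const_mul ε).mul_const (Real.sinh θ)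
      refine h2.congr_deriv (Eq.symm ?_)
      rw [← hKdef, ← hGdef, ← hRdef]
      field_simp
      linear_combination (-ε * K') * hR2
    have htot := ((hc1.smul (hT' s hs)).sub (hc2.smul (hB' s hs))).add
      ((hN' s hs).const_smul (Real.cosh θ))
    have hcT : ε * Real.sinh θ * (K * (G' * K - G * K') / R ^ 3)
        + ε * (K / R) * Real.sinh θ * kg s + Real.cosh θ * K = 0 := by
      field_simp
      linear_combination (ε * K) * hcon2 + (-(Real.cosh θ) * K * R ^ 3) * hε2
    have hcB : ε * Real.sinh θ * (G * (G' * K - G * K') / R ^ 3)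
        + ε * (G / R) * Real.sinh θ * kg s + Real.cosh θ * G = 0 := by
      field_simp
      linear_combination (ε * G) * hcon2 + (-(Real.cosh θ) * G * R ^ 3) * hε2
    refine htot.congr_deriv (Eq.symm ?_)
    funext i
    simp only [Pi.add_apply, Pi.sub_apply, Pi.smul_apply, Pi.zero_apply, smul_eq_mul,
      Pi.neg_apply]
    linear_combination (-(T s i)) * hcT + (-(B s i)) * hcB
  refine ⟨key, ?_, ?_, ?_⟩
  · intro s hs t ht
    have hb := Convex.norm_image_sub_le_of_norm_hasDerivWithin_le
      (f' := fun _ => (0 : Fin 3 → ℝ)) (C := 0)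
      (fun x hx => (key x hx).hasDerivWithinAt)
      (fun x hx => by simp) (convex_Ioo a b) ht hs
    simp only [norm_zero, zero_mul] at hb
    exact sub_eq_zero.mp (norm_le_zero_iff.mp hb)
  · intro s hs
    have e1 := hTT s hs; have e2 := hBB s hs; have e3 := hNN s hs
    have e4 := hTB s hs; have e5 := hTN s hs; have e6 := hBN s hs
    simp only [mdot] at e1 e2 e3 e4 e5 e6 ⊢
    have hpos : (0:ℝ) < kn s ^ 2 + τg s ^ 2 := by
      have := hkn0 s hs; positivity
    have hR2 : Real.sqrt (kn s ^ 2 + τg s ^ 2) ^ 2 = kn s ^ 2 + τg s ^ 2 :=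
      Real.sq_sqrt hpos.le
    have hRne : Real.sqrt (kn s ^ 2 + τg s ^ 2) ≠ 0 := (Real.sqrt_pos.mpr hpos).ne'
    set p := ε * (τg s / Real.sqrt (kn s ^ 2 + τg s ^ 2)) * Real.sinh θ with hp
    set q := ε * (kn s / Real.sqrt (kn s ^ 2 + τg s ^ 2)) * Real.sinh θ with hq
    have hpq : p ^ 2 + q ^ 2 - Real.cosh θ ^ 2 = -1 := by
      have hch := Real.cosh_sq θ
      rw [hp, hq]
      field_simp
      linear_combination (Real.sinh θ ^ 2 * (kn s ^ 2 + τg s ^ 2)) * hε2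
        + (Real.sinh θ ^ 2 * ε ^ 2 + 1 - Real.cosh θ ^ 2 + Real.sinh θ ^ 2
            - ε ^ 2 * Real.sinh θ ^ 2) * hR2
        + (Real.sqrt (kn s ^ 2 + τg s ^ 2) ^ 2 - 2 * τg s ^ 2 - 2 * kn s ^ 2) * hch + (1 - Real.cosh θ ^ 2) * hR2
    simp only [Pi.add_apply, Pi.sub_apply, Pi.smul_apply, smul_eq_mul]
    linear_combination p ^ 2 * e1 + q ^ 2 * e2 + Real.cosh θ ^ 2 * e3
      - 2 * p * q * e4 + 2 * p * Real.cosh θ * e5 - 2 * q * Real.cosh θ * e6 + hpq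
  · intro s hs
    have e3 := hNN s hs; have e5 := hTN s hs; have e6 := hBN s hs
    simp only [mdot] at e3 e5 e6 ⊢
    simp only [Pi.add_apply, Pi.sub_apply, Pi.smul_apply, smul_eq_mul]
    linear_combination (ε * (τg s / Real.sqrt (kn s ^ 2 + τg s ^ 2)) * Real.sinh θ) * e5
      - (ε * (kn s / Real.sqrt (kn s ^ 2 + τg s ^ 2)) * Real.sinh θ) * e6
      + Real.cosh θ * e3
end

section
/- (Theorem 1) The curve α is an isophote curve with a timelike axis — i.e., there exist θ > 0 and a constant vector d ∈ ℝ³ with ⟨d,d⟩ = −1 such that ⟨N(s),d⟩ = −cosh θ for all s ∈ I — if and only if ψ is a constant function on I with |ψ| > 1. -/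
section helpers

lemma mdot_deriv {F : ℝ → Fin 3 → ℝ} {v : Fin 3 → ℝ} {d : Fin 3 → ℝ} {s : ℝ}
    (h : HasDerivAt F v s) :
    HasDerivAt (fun t => mdot (F t) d) (mdot v d) s := by
  have h0 := (hasDerivAt_pi.1 h) 0
  have h1 := (hasDerivAt_pi.1 h) 1
  have h2 := (hasDerivAt_pi.1 h) 2
  have := ((h0.mul_const (d 0)).neg.add (h1.mul_const (d 1))).add (h2.mul_const (d 2))
  simp only [mdot]; exact this

lemma mdot_smul_add (x y : ℝ) (p q d : Fin 3 → ℝ) :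
    mdot (x • p + y • q) d = x * mdot p d + y * mdot q d := by
  simp [mdot]; ring

private lemma det_gram (g00 g11 g22 g01 g02 g12 : ℝ)
    (h00 : g00 = 1) (h11 : g11 = 1) (h22 : g22 = -1)
    (h01 : g01 = 0) (h02 : g02 = 0) (h12 : g12 = 0) :
    g00 * (g11 * g22 - g12 * g12) - g01 * (g01 * g22 - g12 * g02)
      + g02 * (g01 * g12 - g11 * g02) = -1 := by
  subst h00 h11 h22 h01 h02 h12; norm_num

lemma frame_expand (u v w d : Fin 3 → ℝ) (a b c : ℝ)
    (huu : mdot u u = 1) (hvv : mdot v v = 1) (hww : mdot w w = -1)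
    (huv : mdot u v = 0) (huw : mdot u w = 0) (hvw : mdot v w = 0)
    (hda : mdot u d = a) (hdb : mdot v d = b) (hdc : mdot w d = c) :
    ∀ i, d i = a * u i + b * v i - c * w i := by
  simp only [mdot] at huu hvv hww huv huw hvw hda hdb hdc
  have hG := det_gram _ _ _ _ _ _ huu hvv hww huv huw hvw
  set D : ℝ := u 0 * (v 1 * w 2 - v 2 * w 1) - u 1 * (v 0 * w 2 - v 2 * w 0)
      + u 2 * (v 0 * w 1 - v 1 * w 0) with hD
  have hsq : D ^ 2 = 1 := by rw [hD]; linear_combination (-1 : ℝ) * hG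
  have hp : -(u 0 * (d 0 - (a * u 0 + b * v 0 - c * w 0)))
      + u 1 * (d 1 - (a * u 1 + b * v 1 - c * w 1))
      + u 2 * (d 2 - (a * u 2 + b * v 2 - c * w 2)) = 0 := by
    linear_combination hda - a * huu - b * huv + c * huw
  have hq : -(v 0 * (d 0 - (a * u 0 + b * v 0 - c * w 0)))
      + v 1 * (d 1 - (a * u 1 + b * v 1 - c * w 1))
      + v 2 * (d 2 - (a * u 2 + b * v 2 - c * w 2)) = 0 := by
    linear_combination hdb - a * huv - b * hvv + c * hvw
  have hr : -(w 0 * (d 0 - (a * u 0 + b * v 0 - c * w 0)))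
      + w 1 * (d 1 - (a * u 1 + b * v 1 - c * w 1))
      + w 2 * (d 2 - (a * u 2 + b * v 2 - c * w 2)) = 0 := by
    linear_combination hdc - a * huw - b * hvw + c * hww
  intro i
  fin_cases i
  · show d 0 = a * u 0 + b * v 0 - c * w 0
    have h1 : (d 0 - (a * u 0 + b * v 0 - c * w 0)) * D = 0 := by
      rw [hD]
      linear_combination (-(v 1 * w 2 - v 2 * w 1)) * hp + (u 1 * w 2 - u 2 * w 1) * hq
        + (-(u 1 * v 2 - u 2 * v 1)) * hr
    linear_combination D * h1 - (d 0 - (a * u 0 + b * v 0 - c * w 0)) * hsq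
  · show d 1 = a * u 1 + b * v 1 - c * w 1
    have h1 : (d 1 - (a * u 1 + b * v 1 - c * w 1)) * D = 0 := by
      rw [hD]
      linear_combination (-(v 0 * w 2 - v 2 * w 0)) * hp + (u 0 * w 2 - u 2 * w 0) * hq
        + (-(u 0 * v 2 - u 2 * v 0)) * hr
    linear_combination D * h1 - (d 1 - (a * u 1 + b * v 1 - c * w 1)) * hsq
  · show d 2 = a * u 2 + b * v 2 - c * w 2
    have h1 : (d 2 - (a * u 2 + b * v 2 - c * w 2)) * D = 0 := by
      rw [hD]
      linear_combination (v 0 * w 1 - v 1 * w 0) * hp + (-(u 0 * w 1 - u 1 * w 0)) * hq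
        + (u 0 * v 1 - u 1 * v 0) * hr
    linear_combination D * h1 - (d 2 - (a * u 2 + b * v 2 - c * w 2)) * hsq

lemma mdot_self_of_frame (u v w d : Fin 3 → ℝ) (a b c : ℝ)
    (huu : mdot u u = 1) (hvv : mdot v v = 1) (hww : mdot w w = -1)
    (huv : mdot u v = 0) (huw : mdot u w = 0) (hvw : mdot v w = 0)
    (hda : mdot u d = a) (hdb : mdot v d = b) (hdc : mdot w d = c) :
    mdot d d = a ^ 2 + b ^ 2 - c ^ 2 := by
  have h := frame_expand u v w d a b c huu hvv hww huv huw hvw hda hdb hdc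
  simp only [mdot] at huu hvv hww huv huw hvw ⊢
  rw [h 0, h 1, h 2]
  linear_combination a ^ 2 * huu + b ^ 2 * hvv + c ^ 2 * hww + 2 * a * b * huv
    - 2 * a * c * huw - 2 * b * c * hvw

lemma mdot_comb_self (u v w : Fin 3 → ℝ) (x y z : ℝ)
    (huu : mdot u u = 1) (hvv : mdot v v = 1) (hww : mdot w w = -1)
    (huv : mdot u v = 0) (huw : mdot u w = 0) (hvw : mdot v w = 0) :
    mdot (fun i => x * u i + y * v i + z * w i) (fun i => x * u i + y * v i + z * w i)
      = x ^ 2 + y ^ 2 - z ^ 2 := by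
  simp only [mdot] at *
  linear_combination x ^ 2 * huu + y ^ 2 * hvv + z ^ 2 * hww + 2 * x * y * huv
    + 2 * x * z * huw + 2 * y * z * hvw

lemma mdot_left_comb (p u v w : Fin 3 → ℝ) (x y z : ℝ) :
    mdot p (fun i => x * u i + y * v i + z * w i)
      = x * mdot p u + y * mdot p v + z * mdot p w := by
  simp only [mdot]; ring

lemma const_of_deriv_zero_Ioo {f : ℝ → ℝ} {a b : ℝ}
    (h : ∀ s ∈ Set.Ioo a b, HasDerivAt f 0 s) {x y : ℝ}
    (hx : x ∈ Set.Ioo a b) (hy : y ∈ Set.Ioo a b) : f x = f y := by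
  wlog hxy : x ≤ y generalizing x y
  · exact (this hy hx (le_of_not_ge hxy)).symm
  have hsub : Set.Icc x y ⊆ Set.Ioo a b := fun t ht =>
    ⟨lt_of_lt_of_le hx.1 ht.1, lt_of_le_of_lt ht.2 hy.2⟩
  have := constant_of_has_deriv_right_zero (f := f) (a := x) (b := y)
    (fun t ht => ((h t (hsub ht)).continuousAt).continuousWithinAt)
    (fun t ht => (h t (hsub (Set.Ico_subset_Icc_self ht))).hasDerivWithinAt)
  exact (this y (Set.right_mem_Icc.2 hxy)).symm

lemma sqrt_cube {x : ℝ} (hx : 0 ≤ x) : Real.sqrt (x ^ 3) = Real.sqrt x ^ 3 := by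
  rw [show x ^ 3 = x ^ 2 * x by ring, Real.sqrt_mul (sq_nonneg x), Real.sqrt_sq hx,
    pow_succ, Real.sq_sqrt hx]

end helpers

set_option maxHeartbeats 1000000 in
/-- **Theorem 1.** The curve `α` is an isophote curve with a timelike axis — there
exist `θ > 0` and a constant vector `d` with `⟨d,d⟩ = −1` and `⟨N,d⟩ = −cosh θ`
along the curve — if and only if `ψ` is a constant function on `I` with `|ψ| > 1`. -/
theorem statement7
    -- the open interval `I`
    (a b : ℝ) (hab : a < b) (I : Set ℝ) (hI : I = Set.Ioo a b)
    -- the Darboux frame `T, B, N` of a unit-speed spacelike curve on a spacelike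
    -- surface, with normal curvature `kn`, geodesic curvature `kg` and geodesic
    -- torsion `τg`
    (T B N : ℝ → Fin 3 → ℝ) (kn kg τg : ℝ → ℝ)
    (hTs : ContDiffOn ℝ (⊤ : ℕ∞) T I) (hBs : ContDiffOn ℝ (⊤ : ℕ∞) B I) (hNs : ContDiffOn ℝ (⊤ : ℕ∞) N I)
    (hkns : ContDiffOn ℝ (⊤ : ℕ∞) kn I) (hkgs : ContDiffOn ℝ (⊤ : ℕ∞) kg I)
    (hτgs : ContDiffOn ℝ (⊤ : ℕ∞) τg I)
    (hTT : ∀ s ∈ I, mdot (T s) (T s) = 1)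
    (hBB : ∀ s ∈ I, mdot (B s) (B s) = 1)
    (hNN : ∀ s ∈ I, mdot (N s) (N s) = -1)
    (hTB : ∀ s ∈ I, mdot (T s) (B s) = 0)
    (hTN : ∀ s ∈ I, mdot (T s) (N s) = 0)
    (hBN : ∀ s ∈ I, mdot (B s) (N s) = 0)
    -- the Darboux frame equations
    (hT' : ∀ s ∈ I, HasDerivAt T (kg s • B s + kn s • N s) s)
    (hB' : ∀ s ∈ I, HasDerivAt B ((-kg s) • T s + τg s • N s) s)
    (hN' : ∀ s ∈ I, HasDerivAt N (kn s • T s + τg s • B s) s)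
    -- `k_n` never vanishes on `I`
    (hkn0 : ∀ s ∈ I, kn s ≠ 0)
    -- `ψ(s) = (k_n²/(k_n² + τ_g²)^{3/2})·(τ_g/k_n)′(s) + k_g(s)/(k_n² + τ_g²)^{1/2}`
    (ψ : ℝ → ℝ)
    (hψ : ∀ s ∈ I, ψ s =
      kn s ^ 2 / Real.sqrt ((kn s ^ 2 + τg s ^ 2) ^ 3) *
        deriv (fun u => τg u / kn u) s +
      kg s / Real.sqrt (kn s ^ 2 + τg s ^ 2))
    :
    (∃ θ : ℝ, 0 < θ ∧ ∃ d : Fin 3 → ℝ, mdot d d = -1 ∧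
        ∀ s ∈ I, mdot (N s) d = -Real.cosh θ) ↔
      (∃ c : ℝ, 1 < |c| ∧ ∀ s ∈ I, ψ s = c) := by
  subst hI
  have hopen : IsOpen (Set.Ioo a b) := isOpen_Ioo
  have hknd : ∀ s ∈ Set.Ioo a b, HasDerivAt kn (deriv kn s) s := fun s hs =>
    ((hkns.differentiableOn (by simp)).differentiableAt (hopen.mem_nhds hs)).hasDerivAt
  have hτgd : ∀ s ∈ Set.Ioo a b, HasDerivAt τg (deriv τg s) s := fun s hs =>
    ((hτgs.differentiableOn (by simp)).differentiableAt (hopen.mem_nhds hs)).hasDerivAt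
  set ρ : ℝ → ℝ := fun s => Real.sqrt (kn s ^ 2 + τg s ^ 2) with hρdef
  have hsumpos : ∀ s ∈ Set.Ioo a b, 0 < kn s ^ 2 + τg s ^ 2 := fun s hs => by
    have := hkn0 s hs; positivity
  have hρpos : ∀ s ∈ Set.Ioo a b, 0 < ρ s := fun s hs =>
    Real.sqrt_pos.2 (hsumpos s hs)
  have hρsq : ∀ s ∈ Set.Ioo a b, ρ s ^ 2 = kn s ^ 2 + τg s ^ 2 := fun s hs =>
    Real.sq_sqrt (hsumpos s hs).le
  have hρd : ∀ s ∈ Set.Ioo a b,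
      HasDerivAt ρ ((kn s * deriv kn s + τg s * deriv τg s) / ρ s) s := by
    intro s hs
    have h := (((hknd s hs).pow 2).add ((hτgd s hs).pow 2)).sqrt (hsumpos s hs).ne'
    convert h using 1
    · rw [hρdef]; rfl
    have := (hρpos s hs).ne'
    rw [hρdef] at this ⊢
    simp only [Pi.add_apply, Pi.pow_apply]
    field_simp
    ring
  have hψ' : ∀ s ∈ Set.Ioo a b, ψ s =
      (deriv τg s * kn s - τg s * deriv kn s) / ρ s ^ 3 + kg s / ρ s := by
    intro s hs
    rw [hψ s hs, ((hτgd s hs).fun_div (hknd s hs) (hkn0 s hs)).deriv,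
      sqrt_cube (hsumpos s hs).le]
    have h1 : kn s ≠ 0 := hkn0 s hs
    have h2 : ρ s ≠ 0 := (hρpos s hs).ne'
    rw [hρdef]
    field_simp
  constructor
  · rintro ⟨θ, hθ, d, hdd, hNd⟩
    set C := Real.cosh θ with hCdef
    set S := Real.sinh θ with hSdef
    have hSpos : 0 < S := by rw [hSdef]; exact Real.sinh_pos_iff.2 hθ
    have hCpos : 0 < C := Real.cosh_pos θ
    have hCS : C ^ 2 = S ^ 2 + 1 := Real.cosh_sq θ
    set A : ℝ → ℝ := fun s => mdot (T s) d with hAdef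
    set Bf : ℝ → ℝ := fun s => mdot (B s) d with hBfdef
    have hA' : ∀ s ∈ Set.Ioo a b, HasDerivAt A (kg s * Bf s - kn s * C) s := by
      intro s hs
      have h := mdot_deriv (d := d) (hT' s hs)
      rw [mdot_smul_add, hNd s hs] at h
      convert h using 1; rw [hBfdef]; ring
    have hBf' : ∀ s ∈ Set.Ioo a b, HasDerivAt Bf (-(kg s) * A s - τg s * C) s := by
      intro s hs
      have h := mdot_deriv (d := d) (hB' s hs)
      rw [mdot_smul_add, hNd s hs] at h
      convert h using 1; rw [hAdef]; ring
    have horth : ∀ s ∈ Set.Ioo a b, kn s * A s + τg s * Bf s = 0 := by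
      intro s hs
      have h1 := mdot_deriv (d := d) (hN' s hs)
      rw [mdot_smul_add] at h1
      have h2 : HasDerivAt (fun t => mdot (N t) d) 0 s :=
        (hasDerivAt_const s (-C)).congr_of_eventuallyEq
          (Filter.eventually_of_mem (hopen.mem_nhds hs) (fun t ht => hNd t ht))
      have h3 := h1.unique h2
      rw [hAdef, hBfdef]; linarith [h3]
    have hK : ∀ s ∈ Set.Ioo a b, A s ^ 2 + Bf s ^ 2 = S ^ 2 := by
      intro s hs
      have h := mdot_self_of_frame (T s) (B s) (N s) d (A s) (Bf s) (-C)
        (hTT s hs) (hBB s hs) (hNN s hs) (hTB s hs) (hTN s hs) (hBN s hs)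
        rfl rfl (hNd s hs)
      rw [hdd] at h
      nlinarith [hCS]
    set lam : ℝ → ℝ := fun s => -(Bf s) / kn s with hlamdef
    have hAeq : ∀ s ∈ Set.Ioo a b, A s = lam s * τg s := by
      intro s hs
      have h1 := hkn0 s hs
      have h2 := horth s hs
      rw [hlamdef]
      field_simp
      linarith [h2]
    have hlam' : ∀ s ∈ Set.Ioo a b, HasDerivAt lam
        ((Bf s * deriv kn s - (-(kg s) * A s - τg s * C) * kn s) / kn s ^ 2) s := by
      intro s hs
      have h := ((hBf' s hs).fun_neg).fun_div (hknd s hs) (hkn0 s hs)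
      exact h.congr_deriv (by ring)
    have hE1 : ∀ s ∈ Set.Ioo a b,
        kg s * Bf s - kn s * C =
          ((Bf s * deriv kn s - (-(kg s) * A s - τg s * C) * kn s) / kn s ^ 2) * τg s
            + lam s * deriv τg s := by
      intro s hs
      have h1 : HasDerivAt A
          (((Bf s * deriv kn s - (-(kg s) * A s - τg s * C) * kn s) / kn s ^ 2) * τg s
            + lam s * deriv τg s) s :=
        ((hlam' s hs).mul (hτgd s hs)).congr_of_eventuallyEq
          (Filter.eventually_of_mem (hopen.mem_nhds hs) (fun t ht => hAeq t ht))
      exact (hA' s hs).unique h1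
    set g : ℝ → ℝ := fun s => lam s * ρ s with hgdef
    have hkey : ∀ s ∈ Set.Ioo a b, ψ s * g s = -C := by
      intro s hs
      have hk := hkn0 s hs
      have hρ0 := (hρpos s hs).ne'
      have hρ2 := hρsq s hs
      have h2 := horth s hs
      have e1 := hE1 s hs
      simp only [hlamdef] at e1
      field_simp [hk] at e1
      have e1' : kg s * Bf s * kn s ^ 2 - C * kn s ^ 3 - Bf s * deriv kn s * τg s
          - kg s * A s * τg s * kn s - τg s ^ 2 * C * kn s + Bf s * deriv τg s * kn s = 0 := by
        apply mul_left_cancel₀ hk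
        rw [mul_zero]
        linear_combination kn s * e1
      rw [hψ' s hs, hgdef, hlamdef]
      field_simp
      linear_combination -e1' - (kg s * Bf s - kn s * C) * hρ2 - (kg s * τg s) * h2
    have hg2 : ∀ s ∈ Set.Ioo a b, g s ^ 2 = S ^ 2 := by
      intro s hs
      have h2 := horth s hs
      have h3 := hK s hs
      have hk := hkn0 s hs
      have hρ2 := hρsq s hs
      rw [hgdef, hlamdef]
      field_simp
      linear_combination (Bf s)^2 * hρ2 + (kn s)^2 * h3
        + (τg s * Bf s - kn s * A s) * h2
    have hgne : ∀ s ∈ Set.Ioo a b, g s ≠ 0 := by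
      intro s hs h0
      have := hg2 s hs
      rw [h0] at this
      nlinarith
    have hBfc : ContinuousOn Bf (Set.Ioo a b) := by
      have hBc := hBs.continuousOn
      have h0 := (continuous_apply (0 : Fin 3)).comp_continuousOn hBc
      have h1 := (continuous_apply (1 : Fin 3)).comp_continuousOn hBc
      have h2 := (continuous_apply (2 : Fin 3)).comp_continuousOn hBc
      simp only [hBfdef, mdot]
      exact ((h0.mul continuousOn_const).neg.add (h1.mul continuousOn_const)).add
        (h2.mul continuousOn_const)
    have hknc := hkns.continuousOn
    have hτgc := hτgs.continuousOn
    have hρc : ContinuousOn ρ (Set.Ioo a b) := by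
      rw [hρdef]
      exact Real.continuous_sqrt.comp_continuousOn ((hknc.pow 2).add (hτgc.pow 2))
    have hgcont : ContinuousOn g (Set.Ioo a b) := by
      rw [hgdef, hlamdef]
      exact (ContinuousOn.div hBfc.neg hknc hkn0).mul hρc
    have hgconst : ∀ s ∈ Set.Ioo a b, ∀ t ∈ Set.Ioo a b, g s = g t := by
      intro s hs t ht
      by_contra hne
      have hgs := hg2 s hs
      have hgt := hg2 t ht
      have hsub : Set.uIcc s t ⊆ Set.Ioo a b := Set.ordConnected_Ioo.uIcc_subset hs ht
      have h0 : (0:ℝ) ∈ Set.uIcc (g s) (g t) := by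
        have hs' : g s = S ∨ g s = -S := sq_eq_sq_iff_eq_or_eq_neg.1 (by rw [hgs])
        have ht' : g t = S ∨ g t = -S := sq_eq_sq_iff_eq_or_eq_neg.1 (by rw [hgt])
        rcases hs' with h | h <;> rcases ht' with h' | h'
        · exact absurd (h.trans h'.symm) hne
        · rw [h, h']; exact Set.mem_uIcc.2 (Or.inr ⟨by linarith, by linarith⟩)
        · rw [h, h']; exact Set.mem_uIcc.2 (Or.inl ⟨by linarith, by linarith⟩)
        · exact absurd (h.trans h'.symm) hne
      obtain ⟨x, hx, hgx⟩ := intermediate_value_uIcc (hgcont.mono hsub) h0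
      exact hgne x (hsub hx) hgx
    have hs₀ : (a + b) / 2 ∈ Set.Ioo a b := ⟨by linarith, by linarith⟩
    refine ⟨ψ ((a + b) / 2), ?_, ?_⟩
    · have h1 := hkey _ hs₀
      have h2 := hg2 _ hs₀
      have habsg : |g ((a + b) / 2)| = S := by
        have := abs_nonneg (g ((a + b) / 2))
        nlinarith [sq_abs (g ((a + b) / 2))]
      have habs : |ψ ((a + b) / 2)| * S = C := by
        rw [← habsg, ← abs_mul, h1, abs_neg, abs_of_pos hCpos]
      have hSC : S < C := by nlinarith [hCS, hSpos, hCpos]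
      have hlt : 1 * S < |ψ ((a + b) / 2)| * S := by rw [habs, one_mul]; exact hSC
      exact lt_of_mul_lt_mul_right hlt hSpos.le
    · intro s hs
      have h1 := hkey s hs
      have h0 := hkey _ hs₀
      have hgeq := hgconst s hs _ hs₀
      have hne := hgne s hs
      rw [hgeq] at h1
      have := h1.trans h0.symm
      exact mul_right_cancel₀ (hgeq ▸ hne) this

  · rintro ⟨c, hc, hcψ⟩
    have hc0 : c ≠ 0 := by
      intro h; rw [h] at hc; simp at hc; linarith
    have hc2 : 1 < c ^ 2 := by nlinarith [sq_abs c, abs_nonneg c]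
    have hrt : 0 < Real.sqrt (c ^ 2 - 1) := Real.sqrt_pos.2 (by linarith)
    set S := 1 / Real.sqrt (c ^ 2 - 1) with hSdef
    have hSpos : 0 < S := by positivity
    set θ := Real.arsinh S with hθdef
    have hθpos : 0 < θ := Real.arsinh_pos_iff.2 hSpos
    have hsinh : Real.sinh θ = S := Real.sinh_arsinh S
    set C := |c| * S with hCdef
    have hcabs : 0 < |c| := by linarith [hc]
    have hCpos : 0 < C := by positivity
    have hCS : C ^ 2 = S ^ 2 + 1 := by
      rw [hCdef, hSdef]
      have h1 : Real.sqrt (c ^ 2 - 1) ^ 2 = c ^ 2 - 1 := Real.sq_sqrt (by linarith)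
      have h2 : Real.sqrt (c ^ 2 - 1) ≠ 0 := hrt.ne'
      field_simp
      nlinarith [sq_abs c, h1]
    have hcosh : Real.cosh θ = C := by
      have h1 := Real.cosh_sq θ
      rw [hsinh] at h1
      have h2 : Real.cosh θ ^ 2 = C ^ 2 := by rw [h1, hCS]
      have h4 : (Real.cosh θ - C) * (Real.cosh θ + C) = 0 := by linear_combination h2
      rcases mul_eq_zero.1 h4 with h | h
      · linarith
      · exfalso; linarith [Real.cosh_pos θ, hCpos]
    set S0 := -C / c with hS0def
    have hS0c : S0 * c = -C := by rw [hS0def]; field_simp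
    have hC2 : C ^ 2 = c ^ 2 * S ^ 2 := by rw [hCdef, mul_pow, sq_abs]
    have hS02 : S0 ^ 2 = S ^ 2 := by
      have h1 : S0 ^ 2 = C ^ 2 / c ^ 2 := by rw [hS0def]; ring
      rw [h1, hC2]
      field_simp
    set μ : ℝ → ℝ := fun s => S0 * τg s / ρ s with hμdef
    set ν : ℝ → ℝ := fun s => -(S0 * kn s) / ρ s with hνdef
    set Dv : ℝ → Fin 3 → ℝ := fun s i => μ s * T s i + ν s * B s i + C * N s i with hDdef
    have hceq : ∀ s ∈ Set.Ioo a b, c * ρ s ^ 3 =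
        (deriv τg s * kn s - τg s * deriv kn s) + kg s * ρ s ^ 2 := by
      intro s hs
      have h := hψ' s hs
      rw [hcψ s hs] at h
      have hρ0 := (hρpos s hs).ne'
      field_simp at h
      apply mul_left_cancel₀ hρ0
      linear_combination ρ s * h
    have hD0 : ∀ i, ∀ s ∈ Set.Ioo a b, HasDerivAt (fun t => Dv t i) 0 s := by
      intro i s hs
      have hρ0 := (hρpos s hs).ne'
      have hρ2 := hρsq s hs
      have hce := hceq s hs
      have hTi := (hasDerivAt_pi.1 (hT' s hs)) i
      have hBi := (hasDerivAt_pi.1 (hB' s hs)) i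
      have hNi := (hasDerivAt_pi.1 (hN' s hs)) i
      simp only [Pi.add_apply, Pi.smul_apply, smul_eq_mul] at hTi hBi hNi
      have hμ' : HasDerivAt μ ((S0 * deriv τg s * ρ s
          - S0 * τg s * ((kn s * deriv kn s + τg s * deriv τg s) / ρ s)) / ρ s ^ 2) s := by
        have h := ((hτgd s hs).const_mul S0).fun_div (hρd s hs) hρ0
        exact h.congr_deriv (by ring)
      have hν' : HasDerivAt ν ((-(S0 * deriv kn s) * ρ s
          + S0 * kn s * ((kn s * deriv kn s + τg s * deriv τg s) / ρ s)) / ρ s ^ 2) s := by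
        have h := (((hknd s hs).const_mul S0).fun_neg).fun_div (hρd s hs) hρ0
        exact h.congr_deriv (by ring)
      have hcN : μ s * kn s + ν s * τg s = 0 := by
        rw [hμdef, hνdef]; field_simp; ring
      have hcT : (S0 * deriv τg s * ρ s
          - S0 * τg s * ((kn s * deriv kn s + τg s * deriv τg s) / ρ s)) / ρ s ^ 2
          - ν s * kg s + C * kn s = 0 := by
        rw [hνdef]
        field_simp
        linear_combination (kn s * ρ s ^ 3) * hS0c - (S0 * kn s) * hce
          + (S0 * deriv τg s) * hρ2
      have hcB : μ s * kg s + ((-(S0 * deriv kn s) * ρ s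
          + S0 * kn s * ((kn s * deriv kn s + τg s * deriv τg s) / ρ s)) / ρ s ^ 2)
          + C * τg s = 0 := by
        rw [hμdef]
        field_simp
        linear_combination (τg s * ρ s ^ 3) * hS0c - (S0 * τg s) * hce
          - (S0 * deriv kn s) * hρ2
      have h := ((hμ'.mul hTi).add (hν'.mul hBi)).add (hNi.const_mul C)
      have hzero : (S0 * deriv τg s * ρ s
          - S0 * τg s * ((kn s * deriv kn s + τg s * deriv τg s) / ρ s)) / ρ s ^ 2 * T s i
          + μ s * (kg s * B s i + kn s * N s i)
          + ((-(S0 * deriv kn s) * ρ s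
          + S0 * kn s * ((kn s * deriv kn s + τg s * deriv τg s) / ρ s)) / ρ s ^ 2 * B s i
          + ν s * (-kg s * T s i + τg s * N s i))
          + C * (kn s * T s i + τg s * B s i) = 0 := by
        linear_combination (T s i) * hcT + (B s i) * hcB + (N s i) * hcN
      rw [hzero] at h
      exact h
    have hs₀ : (a + b) / 2 ∈ Set.Ioo a b := ⟨by linarith, by linarith⟩
    have hDconst : ∀ s ∈ Set.Ioo a b, ∀ i, Dv s i = Dv ((a + b) / 2) i :=
      fun s hs i => const_of_deriv_zero_Ioo (fun t ht => hD0 i t ht) hs hs₀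
    refine ⟨θ, hθpos, Dv ((a + b) / 2), ?_, ?_⟩
    · have h := mdot_comb_self (T ((a+b)/2)) (B ((a+b)/2)) (N ((a+b)/2))
        (μ ((a+b)/2)) (ν ((a+b)/2)) C
        (hTT _ hs₀) (hBB _ hs₀) (hNN _ hs₀) (hTB _ hs₀) (hTN _ hs₀) (hBN _ hs₀)
      have heq : mdot (Dv ((a+b)/2)) (Dv ((a+b)/2)) =
          μ ((a+b)/2) ^ 2 + ν ((a+b)/2) ^ 2 - C ^ 2 := h
      rw [heq]
      have hρ2 := hρsq _ hs₀
      have hρ0 := (hρpos _ hs₀).ne'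
      have hμν : μ ((a+b)/2) ^ 2 + ν ((a+b)/2) ^ 2 = S0 ^ 2 := by
        have hx : μ ((a+b)/2) ^ 2 + ν ((a+b)/2) ^ 2
            = S0 ^ 2 * (kn ((a+b)/2) ^ 2 + τg ((a+b)/2) ^ 2) / ρ ((a+b)/2) ^ 2 := by
          rw [hμdef, hνdef]; ring
        rw [hx, ← hρ2, mul_div_assoc, div_self (pow_ne_zero 2 hρ0), mul_one]
      rw [hμν, hS02]
      linarith [hCS]
    · intro s hs
      have h1 : mdot (N s) (Dv ((a+b)/2)) = mdot (N s) (Dv s) := by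
        have : Dv ((a+b)/2) = Dv s := funext fun i => (hDconst s hs i).symm
        rw [this]
      rw [h1]
      have h2 : mdot (N s) (Dv s) = μ s * mdot (N s) (T s) + ν s * mdot (N s) (B s)
          + C * mdot (N s) (N s) := mdot_left_comb (N s) (T s) (B s) (N s) _ _ _
      rw [h2, hNN s hs, hcosh]
      have hNT : mdot (N s) (T s) = 0 := by
        have := hTN s hs; simp only [mdot] at *; linarith
      have hNB : mdot (N s) (B s) = 0 := by
        have := hBN s hs; simp only [mdot] at *; linarith
      rw [hNT, hNB]
      ring
end

section
/- Along the curve α, the Gaussian (spherical) image N satisfies: ⟨N′(s), N′(s)⟩ = k_n(s)² + τ_g(s)² for all s ∈ I, and ⟨N′(s) × N″(s), N′(s) × N″(s)⟩ = (k_n(s)² + τ_g(s)²)³·(1 − ψ(s)²) for all s ∈ I; equivalently, the curvature κ̄ of the spherical image N (a curve on the Lorentzian unit sphere S₁²) satisfies κ̄² = 1 − ψ², so ψ is the geodesic curvature of the spherical image up to sign. -/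
/-- The Lorentzian cross product on `E₁³`:
`x × y = (x₂y₃ − x₃y₂, x₁y₃ − x₃y₁, x₂y₁ − x₁y₂)`. -/
noncomputable def lcross (x y : Fin 3 → ℝ) : Fin 3 → ℝ :=
  ![x 1 * y 2 - x 2 * y 1, x 0 * y 2 - x 2 * y 0, x 1 * y 0 - x 0 * y 1]

lemma mdot_comb (T B N : Fin 3 → ℝ) (hTT : mdot T T = 1) (hBB : mdot B B = 1)
    (hNN : mdot N N = -1) (hTB : mdot T B = 0) (hTN : mdot T N = 0)
    (hBN : mdot B N = 0) (p q r p' q' r' : ℝ) :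
    mdot (p • T + q • B + r • N) (p' • T + q' • B + r' • N)
      = p * p' + q * q' - r * r' := by
  simp only [mdot, Pi.add_apply, Pi.smul_apply, smul_eq_mul] at *
  linear_combination p*p'*hTT + q*q'*hBB + r*r'*hNN + (p*q'+q*p')*hTB
    + (p*r'+r*p')*hTN + (q*r'+r*q')*hBN

lemma lcross_mdot (x y : Fin 3 → ℝ) :
    mdot (lcross x y) (lcross x y) = (mdot x y)^2 - mdot x x * mdot y y := by
  simp [mdot, lcross]; ring

/-- The Gaussian (spherical) image `N` of the curve satisfies
`⟨N′,N′⟩ = k_n² + τ_g²` and `⟨N′×N″, N′×N″⟩ = (k_n² + τ_g²)³·(1 − ψ²)` on `I`;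
equivalently its curvature `κ̄` as a curve on the Lorentzian unit sphere `S₁²`
satisfies `κ̄² = 1 − ψ²`, so `ψ` is the geodesic curvature of the spherical image
up to sign. -/
theorem statement8
    -- the open interval `I`
    (a b : ℝ) (hab : a < b) (I : Set ℝ) (hI : I = Set.Ioo a b)
    -- the Darboux frame `T, B, N` of a unit-speed spacelike curve on a spacelike
    -- surface, with normal curvature `kn`, geodesic curvature `kg` and geodesic
    -- torsion `τg`
    (T B N : ℝ → Fin 3 → ℝ) (kn kg τg : ℝ → ℝ)
    (hTs : ContDiffOn ℝ (⊤ : ℕ∞) T I) (hBs : ContDiffOn ℝ (⊤ : ℕ∞) B I) (hNs : ContDiffOn ℝ (⊤ : ℕ∞) N I)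
    (hkns : ContDiffOn ℝ (⊤ : ℕ∞) kn I) (hkgs : ContDiffOn ℝ (⊤ : ℕ∞) kg I)
    (hτgs : ContDiffOn ℝ (⊤ : ℕ∞) τg I)
    (hTT : ∀ s ∈ I, mdot (T s) (T s) = 1)
    (hBB : ∀ s ∈ I, mdot (B s) (B s) = 1)
    (hNN : ∀ s ∈ I, mdot (N s) (N s) = -1)
    (hTB : ∀ s ∈ I, mdot (T s) (B s) = 0)
    (hTN : ∀ s ∈ I, mdot (T s) (N s) = 0)
    (hBN : ∀ s ∈ I, mdot (B s) (N s) = 0)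
    -- the Darboux frame equations
    (hT' : ∀ s ∈ I, HasDerivAt T (kg s • B s + kn s • N s) s)
    (hB' : ∀ s ∈ I, HasDerivAt B ((-kg s) • T s + τg s • N s) s)
    (hN' : ∀ s ∈ I, HasDerivAt N (kn s • T s + τg s • B s) s)
    -- `k_n` never vanishes on `I`
    (hkn0 : ∀ s ∈ I, kn s ≠ 0)
    -- `ψ(s) = (k_n²/(k_n² + τ_g²)^{3/2})·(τ_g/k_n)′(s) + k_g(s)/(k_n² + τ_g²)^{1/2}`
    (ψ : ℝ → ℝ)
    (hψ : ∀ s ∈ I, ψ s =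
      kn s ^ 2 / Real.sqrt ((kn s ^ 2 + τg s ^ 2) ^ 3) *
        deriv (fun u => τg u / kn u) s +
      kg s / Real.sqrt (kn s ^ 2 + τg s ^ 2))
    -- the first and second derivatives of the spherical image `N`
    (N1 N2 : ℝ → Fin 3 → ℝ)
    (hN1 : ∀ s ∈ I, HasDerivAt N (N1 s) s)
    (hN2 : ∀ s ∈ I, HasDerivAt N1 (N2 s) s) :
    ∀ s ∈ I,
      mdot (N1 s) (N1 s) = kn s ^ 2 + τg s ^ 2 ∧
      mdot (lcross (N1 s) (N2 s)) (lcross (N1 s) (N2 s)) =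
        (kn s ^ 2 + τg s ^ 2) ^ 3 * (1 - ψ s ^ 2) := by
  intro s hs
  have hIopen : IsOpen I := hI ▸ isOpen_Ioo
  have hmem : I ∈ nhds s := hIopen.mem_nhds hs
  -- N1 = kn • T + τg • B on I
  have hN1eq : ∀ u ∈ I, N1 u = kn u • T u + τg u • B u := fun u hu =>
    (hN1 u hu).unique (hN' u hu)
  -- derivatives of kn, τg at s
  have hknd : HasDerivAt kn (deriv kn s) s :=
    (((hkns.contDiffAt hmem).differentiableAt (by simp))).hasDerivAt
  have hτgd : HasDerivAt τg (deriv τg s) s :=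
    (((hτgs.contDiffAt hmem).differentiableAt (by simp))).hasDerivAt
  set kn' := deriv kn s with hkn'
  set τg' := deriv τg s with hτg'
  -- N2 s equals derivative of kn • T + τg • B
  have hg : HasDerivAt (fun u => kn u • T u + τg u • B u) (N2 s) s := by
    apply (hN2 s hs).congr_of_eventuallyEq
    filter_upwards [hmem] with u hu using (hN1eq u hu).symm
  have hg2 : HasDerivAt (fun u => kn u • T u + τg u • B u)
      (kn s • (kg s • B s + kn s • N s) + kn' • T s
        + (τg s • ((-kg s) • T s + τg s • N s) + τg' • B s)) s :=
    (hknd.smul (hT' s hs)).add (hτgd.smul (hB' s hs))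
  have hN2eq : N2 s = (kn' - τg s * kg s) • T s + (kn s * kg s + τg') • B s
      + (kn s ^ 2 + τg s ^ 2) • N s := by
    rw [hg.unique hg2]; module
  have hN1s : N1 s = kn s • T s + τg s • B s + (0:ℝ) • N s := by
    rw [hN1eq s hs]; module
  have hc := mdot_comb (T s) (B s) (N s) (hTT s hs) (hBB s hs) (hNN s hs)
    (hTB s hs) (hTN s hs) (hBN s hs)
  have h11 : mdot (N1 s) (N1 s) = kn s ^ 2 + τg s ^ 2 := by
    rw [hN1s, hc]; ring
  refine ⟨h11, ?_⟩
  have h12 : mdot (N1 s) (N2 s)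
      = kn s * (kn' - τg s * kg s) + τg s * (kn s * kg s + τg') := by
    rw [hN1s, hN2eq, hc]; ring
  have h22 : mdot (N2 s) (N2 s)
      = (kn' - τg s * kg s) ^ 2 + (kn s * kg s + τg') ^ 2
        - (kn s ^ 2 + τg s ^ 2) ^ 2 := by
    rw [hN2eq, hc]; ring
  rw [lcross_mdot, h11, h12, h22]
  -- scalar computation
  have hkn0s := hkn0 s hs
  set D := kn s ^ 2 + τg s ^ 2 with hDdef
  have hD : 0 < D := by positivity
  have hsD : 0 < Real.sqrt D := Real.sqrt_pos.mpr hD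
  have hsD2 : Real.sqrt D ^ 2 = D := Real.sq_sqrt hD.le
  have hsD3 : Real.sqrt (D ^ 3) = D * Real.sqrt D := by
    rw [show D ^ 3 = D ^ 2 * D by ring, Real.sqrt_mul (by positivity),
      Real.sqrt_sq hD.le]
  -- derivative of τg / kn
  have hdiv : HasDerivAt (fun u => τg u / kn u)
      ((τg' * kn s - τg s * kn') / kn s ^ 2) s := hτgd.div hknd hkn0s
  have hdval : deriv (fun u => τg u / kn u) s
      = (τg' * kn s - τg s * kn') / kn s ^ 2 := hdiv.deriv
  have hψs : ψ s = (kn s ^ 2 * ((τg' * kn s - τg s * kn') / kn s ^ 2)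
      + kg s * D) / (D * Real.sqrt D) := by
    rw [hψ s hs, hdval, ← hDdef, hsD3]
    field_simp
  have hψs2 : ψ s ^ 2 = ((τg' * kn s - τg s * kn') + kg s * D) ^ 2 / D ^ 3 := by
    rw [hψs]
    rw [div_pow]
    congr 1
    · field_simp
    · rw [mul_pow, hsD2]; ring
  rw [hψs2]
  field_simp
  ring
end

section
/- (Lemma of Ali–López) Let α be a unit-speed spacelike curve in E₁³ with timelike principal normal and curvature κ(s) ≠ 0 for all s. Then α is a slant helix with timelike axis — i.e., there exist θ > 0 and a constant vector d with ⟨d,d⟩ = −1 such that ⟨n(s),d⟩ = −cosh θ for all s — if and only if σ(s) = (κ²/(κ² + τ²)^{3/2})·(τ/κ)′(s) is a constant function with |σ| > 1. -/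
lemma mdot_comm (x y : Fin 3 → ℝ) : mdot x y = mdot y x := by
  simp only [mdot]; ring

lemma mdot_frame_complete (T N B e : Fin 3 → ℝ)
    (hTT : mdot T T = 1) (hBB : mdot B B = 1) (hNN : mdot N N = -1)
    (hTN : mdot T N = 0) (hTB : mdot T B = 0) (hNB : mdot N B = 0)
    (hT : mdot T e = 0) (hN : mdot N e = 0) (hB : mdot B e = 0) : e = 0 := by
  have hT' : -(T 0 * e 0) + T 1 * e 1 + T 2 * e 2 = 0 := hT
  have hN' : -(N 0 * e 0) + N 1 * e 1 + N 2 * e 2 = 0 := hN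
  have hB' : -(B 0 * e 0) + B 1 * e 1 + B 2 * e 2 = 0 := hB
  set D : ℝ := T 0 * (N 1 * B 2 - N 2 * B 1) - T 1 * (N 0 * B 2 - N 2 * B 0)
      + T 2 * (N 0 * B 1 - N 1 * B 0) with hD
  have hgram : mdot T T * (mdot N N * mdot B B - mdot N B ^ 2)
      - mdot T N * (mdot T N * mdot B B - mdot T B * mdot N B)
      + mdot T B * (mdot T N * mdot N B - mdot T B * mdot N N) = -(D ^ 2) := by
    simp only [mdot, hD]; ring
  rw [hTT, hNN, hBB, hTN, hTB, hNB] at hgram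
  have hD2 : D ^ 2 = 1 := by nlinarith [hgram]
  have hDne : D ≠ 0 := by
    intro h; rw [h] at hD2; norm_num at hD2
  have h0 : e 0 * D = 0 := by
    linear_combination (-(N 1 * B 2 - N 2 * B 1)) * hT' + (T 1 * B 2 - T 2 * B 1) * hN'
      + (-(T 1 * N 2 - T 2 * N 1)) * hB'
  have h1 : e 1 * (-D) = 0 := by
    linear_combination (N 0 * B 2 - N 2 * B 0) * hT' + (-(T 0 * B 2) + T 2 * B 0) * hN'
      + (T 0 * N 2 - T 2 * N 0) * hB'
  have h2 : e 2 * (-D) = 0 := by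
    linear_combination (-(N 0 * B 1) + N 1 * B 0) * hT' + (T 0 * B 1 - T 1 * B 0) * hN'
      + (-(T 0 * N 1) + T 1 * N 0) * hB'
  funext i
  fin_cases i
  · exact (mul_eq_zero.1 h0).resolve_right hDne
  · simpa using (mul_eq_zero.1 h1).resolve_right (neg_ne_zero.2 hDne)
  · simpa using (mul_eq_zero.1 h2).resolve_right (neg_ne_zero.2 hDne)

lemma hasDerivAt_mdot {f : ℝ → Fin 3 → ℝ} {f' : Fin 3 → ℝ} (d : Fin 3 → ℝ) {s : ℝ}
    (hf : HasDerivAt f f' s) : HasDerivAt (fun u => mdot (f u) d) (mdot f' d) s := by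
  have h := hasDerivAt_pi.1 hf
  exact (((h 0).mul_const (d 0)).neg.add ((h 1).mul_const (d 1))).add ((h 2).mul_const (d 2))

lemma continuousOn_mdot {f : ℝ → Fin 3 → ℝ} {S : Set ℝ} (d : Fin 3 → ℝ)
    (hf : ContinuousOn f S) : ContinuousOn (fun u => mdot (f u) d) S := by
  have h : ∀ i, ContinuousOn (fun u => f u i) S := fun i =>
    (continuous_apply i).comp_continuousOn hf
  exact (((h 0).mul continuousOn_const).neg.add ((h 1).mul continuousOn_const)).add
    ((h 2).mul continuousOn_const)

lemma mdot_comb_left (p q r : ℝ) (x y z w : Fin 3 → ℝ) :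
    mdot (p • x + q • y + r • z) w = p * mdot x w + q * mdot y w + r * mdot z w := by
  simp only [mdot, Pi.add_apply, Pi.smul_apply, smul_eq_mul]; ring

lemma mdot_comb_right (w x y z : Fin 3 → ℝ) (p q r : ℝ) :
    mdot w (p • x + q • y + r • z) = p * mdot w x + q * mdot w y + r * mdot w z := by
  simp only [mdot, Pi.add_apply, Pi.smul_apply, smul_eq_mul]; ring

lemma mdot_add_right (w d v : Fin 3 → ℝ) : mdot w (d + v) = mdot w d + mdot w v := by
  simp only [mdot, Pi.add_apply]; ring

set_option maxHeartbeats 1000000 in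
/-- **Lemma (Ali–López).** A unit-speed spacelike curve in `E₁³` with timelike
principal normal and nonvanishing curvature is a slant helix with timelike axis —
there exist `θ > 0` and a constant vector `d` with `⟨d,d⟩ = −1` and
`⟨n,d⟩ = −cosh θ` along the curve — if and only if
`σ(s) = (κ²/(κ² + τ²)^{3/2})·(τ/κ)′(s)` is a constant function with `|σ| > 1`. -/
theorem statement12
    -- the open interval `I`
    (a b : ℝ) (hab : a < b) (I : Set ℝ) (hI : I = Set.Ioo a b)
    -- the Frenet frame `t, n, b` of a unit-speed spacelike curve with timelike
    -- principal normal, with curvature `κ > 0` and torsion `τ`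
    (t n bv : ℝ → Fin 3 → ℝ) (κ τ : ℝ → ℝ)
    (hts : ContDiffOn ℝ (⊤ : ℕ∞) t I) (hns : ContDiffOn ℝ (⊤ : ℕ∞) n I) (hbs : ContDiffOn ℝ (⊤ : ℕ∞) bv I)
    (hκs : ContDiffOn ℝ (⊤ : ℕ∞) κ I) (hτs : ContDiffOn ℝ (⊤ : ℕ∞) τ I)
    (hκpos : ∀ s ∈ I, 0 < κ s)
    (htt : ∀ s ∈ I, mdot (t s) (t s) = 1)
    (hbb : ∀ s ∈ I, mdot (bv s) (bv s) = 1)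
    (hnn : ∀ s ∈ I, mdot (n s) (n s) = -1)
    (htn : ∀ s ∈ I, mdot (t s) (n s) = 0)
    (htb : ∀ s ∈ I, mdot (t s) (bv s) = 0)
    (hnb : ∀ s ∈ I, mdot (n s) (bv s) = 0)
    -- the Frenet–Serret equations
    (ht' : ∀ s ∈ I, HasDerivAt t (κ s • n s) s)
    (hn' : ∀ s ∈ I, HasDerivAt n (κ s • t s + τ s • bv s) s)
    (hb' : ∀ s ∈ I, HasDerivAt bv (τ s • n s) s)
    -- `σ(s) = (κ²/(κ² + τ²)^{3/2})·(τ/κ)′(s)`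
    (σ : ℝ → ℝ)
    (hσ : ∀ s ∈ I, σ s =
      κ s ^ 2 / Real.sqrt ((κ s ^ 2 + τ s ^ 2) ^ 3) *
        deriv (fun u => τ u / κ u) s) :
    (∃ θ : ℝ, 0 < θ ∧ ∃ d : Fin 3 → ℝ, mdot d d = -1 ∧
        ∀ s ∈ I, mdot (n s) d = -Real.cosh θ) ↔
      (∃ c : ℝ, 1 < |c| ∧ ∀ s ∈ I, σ s = c) := by
  have hIopen : IsOpen I := hI ▸ isOpen_Ioo
  have hIconv : Convex ℝ I := hI ▸ convex_Ioo a b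
  have hIoc : Set.OrdConnected I := hI ▸ Set.ordConnected_Ioo
  set s₀ : ℝ := (a + b) / 2 with hs₀def
  have hs₀ : s₀ ∈ I := by rw [hI]; constructor <;> (rw [hs₀def]; linarith)
  have hg2 : ∀ s ∈ I, 0 < κ s ^ 2 + τ s ^ 2 := fun s hs => by
    nlinarith [hκpos s hs, sq_nonneg (τ s)]
  set g : ℝ → ℝ := fun s => Real.sqrt (κ s ^ 2 + τ s ^ 2) with hgdef
  have hgpos : ∀ s ∈ I, 0 < g s := fun s hs => Real.sqrt_pos.2 (hg2 s hs)
  have hgsq : ∀ s ∈ I, g s ^ 2 = κ s ^ 2 + τ s ^ 2 := fun s hs => Real.sq_sqrt (hg2 s hs).le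
  have hκd : ∀ s ∈ I, HasDerivAt κ (deriv κ s) s := fun s hs =>
    ((hκs.contDiffAt (hIopen.mem_nhds hs)).differentiableAt (by simp)).hasDerivAt
  have hτd : ∀ s ∈ I, HasDerivAt τ (deriv τ s) s := fun s hs =>
    ((hτs.contDiffAt (hIopen.mem_nhds hs)).differentiableAt (by simp)).hasDerivAt
  have hσ3 : ∀ s ∈ I, σ s * g s ^ 3 = deriv τ s * κ s - τ s * deriv κ s := by
    intro s hs
    have hκ0 := (hκpos s hs).ne'
    have hdiv : HasDerivAt (fun u => τ u / κ u)
        ((deriv τ s * κ s - τ s * deriv κ s) / κ s ^ 2) s :=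
      (hτd s hs).div (hκd s hs) hκ0
    have hs3 : Real.sqrt ((κ s ^ 2 + τ s ^ 2) ^ 3) = g s ^ 3 := by
      rw [show (κ s ^ 2 + τ s ^ 2) ^ 3 = (g s ^ 3) ^ 2 by rw [← hgsq s hs]; ring,
        Real.sqrt_sq (pow_nonneg (hgpos s hs).le 3)]
    rw [hσ s hs, hdiv.deriv, hs3]
    field_simp
    field_simp [(hgpos s hs).ne']
  constructor
  · rintro ⟨θ, hθ, d, hdd, hnd⟩
    have hsinh : 0 < Real.sinh θ := Real.sinh_pos_iff.2 hθ
    set u : ℝ → ℝ := fun s => mdot (t s) d with hu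
    set w : ℝ → ℝ := fun s => mdot (bv s) d with hw
    have hu' : ∀ s, mdot (t s) d = u s := fun s => rfl
    have hw' : ∀ s, mdot (bv s) d = w s := fun s => rfl
    have hrel1 : ∀ s ∈ I, κ s * u s + τ s * w s = 0 := by
      intro s hs
      have h1 : HasDerivAt (fun x => mdot (n x) d) (mdot (κ s • t s + τ s • bv s) d) s :=
        hasDerivAt_mdot d (hn' s hs)
      have h2 : (fun x => mdot (n x) d) =ᶠ[nhds s] fun _ => -Real.cosh θ := by
        filter_upwards [hIopen.mem_nhds hs] with x hx using hnd x hx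
      have h4 := (h2.hasDerivAt_iff.1 h1).unique (hasDerivAt_const s (-Real.cosh θ))
      have h5 : mdot (κ s • t s + τ s • bv s) d = κ s * u s + τ s * w s := by
        simp only [mdot, Pi.add_apply, Pi.smul_apply, smul_eq_mul, hu, hw]; ring
      rw [← h5, h4]
    have hspan : ∀ s ∈ I, u s ^ 2 + w s ^ 2 = Real.sinh θ ^ 2 := by
      intro s hs
      set e : Fin 3 → ℝ :=
        d + ((-(u s)) • t s + (-Real.cosh θ) • n s + (-(w s)) • bv s) with he
      have het : mdot (t s) e = 0 := by
        rw [he, mdot_add_right, mdot_comb_right, htt s hs, htn s hs, htb s hs, hu' s]; ring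
      have hen : mdot (n s) e = 0 := by
        rw [he, mdot_add_right, mdot_comb_right, mdot_comm (n s) (t s), htn s hs,
          hnn s hs, hnb s hs, hnd s hs]; ring
      have heb : mdot (bv s) e = 0 := by
        rw [he, mdot_add_right, mdot_comb_right, mdot_comm (bv s) (t s), htb s hs,
          mdot_comm (bv s) (n s), hnb s hs, hbb s hs, hw' s]; ring
      have he0 : e = 0 := mdot_frame_complete (t s) (n s) (bv s) e (htt s hs) (hbb s hs)
        (hnn s hs) (htn s hs) (htb s hs) (hnb s hs) het hen heb
      have hd : d = u s • t s + Real.cosh θ • n s + w s • bv s := by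
        rw [he] at he0
        have h := eq_neg_of_add_eq_zero_left he0
        rw [h]; funext i
        simp only [Pi.neg_apply, Pi.add_apply, Pi.smul_apply, smul_eq_mul]; ring
      have h6 : mdot d d = u s ^ 2 - Real.cosh θ ^ 2 + w s ^ 2 := by
        rw [hd]
        simp only [mdot_comb_left, mdot_comb_right]
        rw [mdot_comm (n s) (t s), mdot_comm (bv s) (t s), mdot_comm (bv s) (n s),
          htt s hs, hnn s hs, hbb s hs, htn s hs, htb s hs, hnb s hs]
        ring
      rw [hdd] at h6
      nlinarith [Real.cosh_sq θ, h6]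
    have hwne : ∀ s ∈ I, w s ≠ 0 := by
      intro s hs h0
      have h1 := hrel1 s hs
      rw [h0] at h1
      have hκu : κ s * u s = 0 := by linarith
      have hu0 : u s = 0 := (mul_eq_zero.1 hκu).resolve_left (hκpos s hs).ne'
      have := hspan s hs
      rw [hu0, h0] at this
      nlinarith [hsinh]
    have hkey : ∀ s ∈ I, w s * (deriv τ s * κ s - τ s * deriv κ s)
        = κ s * (κ s ^ 2 + τ s ^ 2) * Real.cosh θ := by
      intro s hs
      have hud : HasDerivAt u (κ s * (-Real.cosh θ)) s := by
        have h := hasDerivAt_mdot d (ht' s hs)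
        have heq : mdot (κ s • n s) d = κ s * (-Real.cosh θ) := by
          have h5 : mdot (κ s • n s) d = κ s * mdot (n s) d := by
            simp only [mdot, Pi.smul_apply, smul_eq_mul]; ring
          rw [h5, hnd s hs]
        rwa [heq] at h
      have hwd : HasDerivAt w (τ s * (-Real.cosh θ)) s := by
        have h := hasDerivAt_mdot d (hb' s hs)
        have heq : mdot (τ s • n s) d = τ s * (-Real.cosh θ) := by
          have h5 : mdot (τ s • n s) d = τ s * mdot (n s) d := by
            simp only [mdot, Pi.smul_apply, smul_eq_mul]; ring
          rw [h5, hnd s hs]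
        rwa [heq] at h
      have hF : HasDerivAt (fun x => κ x * u x + τ x * w x)
          (deriv κ s * u s + κ s * (κ s * (-Real.cosh θ))
            + (deriv τ s * w s + τ s * (τ s * (-Real.cosh θ)))) s :=
        ((hκd s hs).mul hud).add ((hτd s hs).mul hwd)
      have hF0 : (fun x => κ x * u x + τ x * w x) =ᶠ[nhds s] fun _ => (0 : ℝ) := by
        filter_upwards [hIopen.mem_nhds hs] with x hx using hrel1 x hx
      have h4 := (hF0.hasDerivAt_iff.1 hF).unique (hasDerivAt_const s (0 : ℝ))
      have h1 := hrel1 s hs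
      linear_combination κ s * h4 - deriv κ s * h1
    have hσw : ∀ s ∈ I, σ s * (w s * g s) = κ s * Real.cosh θ := by
      intro s hs
      have e1 := hσ3 s hs
      have e2 := hkey s hs
      have e3 := hgsq s hs
      have hg0 := (hgpos s hs).ne'
      have hmain : σ s * (w s * g s) * g s ^ 2 = κ s * Real.cosh θ * g s ^ 2 := by
        linear_combination w s * e1 + e2 - κ s * Real.cosh θ * e3
      exact mul_right_cancel₀ (pow_ne_zero 2 hg0) hmain
    have hσsq : ∀ s ∈ I, σ s ^ 2 * Real.sinh θ ^ 2 = Real.cosh θ ^ 2 := by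
      intro s hs
      have h1 := hrel1 s hs
      have h2 := hσw s hs
      have h3 := hgsq s hs
      have h4 := hspan s hs
      have hκ0 := (hκpos s hs).ne'
      have e5 : κ s ^ 2 * u s ^ 2 = τ s ^ 2 * w s ^ 2 := by
        linear_combination (κ s * u s - τ s * w s) * h1
      have e6 : w s ^ 2 * g s ^ 2 = κ s ^ 2 * Real.sinh θ ^ 2 := by
        linear_combination w s ^ 2 * h3 - e5 + κ s ^ 2 * h4
      have e7 : σ s ^ 2 * Real.sinh θ ^ 2 * κ s ^ 2 = Real.cosh θ ^ 2 * κ s ^ 2 := by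
        linear_combination (σ s * (w s * g s) + κ s * Real.cosh θ) * h2 - σ s ^ 2 * e6
      have := mul_right_cancel₀ (pow_ne_zero 2 hκ0) e7
      exact this
    have hsgn : ∀ s ∈ I, 0 < σ s * w s := by
      intro s hs
      have h8 : 0 < σ s * w s * g s := by
        rw [show σ s * w s * g s = σ s * (w s * g s) from by ring, hσw s hs]
        exact mul_pos (hκpos s hs) (Real.cosh_pos θ)
      nlinarith [hgpos s hs]
    have hwsgn : ∀ s ∈ I, 0 < w s * w s₀ := by
      intro s hs
      by_contra hle
      push_neg at hle
      have hcont : ContinuousOn w I := continuousOn_mdot d hbs.continuousOn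
      have hsub : Set.uIcc s s₀ ⊆ I := hIoc.uIcc_subset hs hs₀
      have h0mem : (0 : ℝ) ∈ Set.uIcc (w s) (w s₀) := by
        rcases mul_nonpos_iff.1 hle with ⟨h1, h2⟩ | ⟨h1, h2⟩
        · exact Set.mem_uIcc.2 (Or.inr ⟨h2, h1⟩)
        · exact Set.mem_uIcc.2 (Or.inl ⟨h1, h2⟩)
      obtain ⟨x, hxmem, hx0⟩ := intermediate_value_uIcc (hcont.mono hsub) h0mem
      exact hwne x (hsub hxmem) hx0
    refine ⟨σ s₀, ?_, fun s hs => ?_⟩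
    · have h1 := hσsq s₀ hs₀
      have h2 : 1 < σ s₀ ^ 2 := by nlinarith [Real.cosh_sq θ, hsinh]
      nlinarith [sq_abs (σ s₀), abs_nonneg (σ s₀)]
    · have e1 := hσsq s hs
      have e2 := hσsq s₀ hs₀
      have hsq2 : σ s ^ 2 = σ s₀ ^ 2 := by
        have hs2 : Real.sinh θ ^ 2 ≠ 0 := pow_ne_zero 2 hsinh.ne'
        exact mul_right_cancel₀ hs2 (e1.trans e2.symm)
      have p1 : 0 < σ s * w s * (σ s₀ * w s₀) := mul_pos (hsgn s hs) (hsgn s₀ hs₀)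
      have p2 := hwsgn s hs
      have hprod : 0 < σ s * σ s₀ := by nlinarith [p1, p2]
      have hz : (σ s - σ s₀) * (σ s + σ s₀) = 0 := by linear_combination hsq2
      rcases mul_eq_zero.1 hz with h | h
      · linarith
      · exfalso; nlinarith [hprod, sq_nonneg (σ s₀)]
  · rintro ⟨c, hc, hcs⟩
    have hc2 : 1 < c ^ 2 := by nlinarith [sq_abs c, abs_nonneg c]
    have hc0 : c ≠ 0 := by intro h; rw [h] at hc2; norm_num at hc2
    have hcm1 : 0 < c ^ 2 - 1 := by linarith
    set ρ : ℝ := 1 / Real.sqrt (c ^ 2 - 1) with hρdef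
    have hρ : 0 < ρ := div_pos one_pos (Real.sqrt_pos.2 hcm1)
    set θ : ℝ := Real.arsinh ρ with hθdef
    have hθ : 0 < θ := Real.arsinh_pos_iff.2 hρ
    set B : ℝ := Real.cosh θ with hBdef
    have hBpos : 0 < B := Real.cosh_pos θ
    have hB2 : B ^ 2 * (c ^ 2 - 1) = c ^ 2 := by
      rw [hBdef, hθdef, Real.cosh_arsinh,
        Real.sq_sqrt (by positivity : (0:ℝ) ≤ 1 + ρ ^ 2), hρdef, div_pow, one_pow,
        Real.sq_sqrt hcm1.le]
      field_simp
      ring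
    set A : ℝ → ℝ := fun s => -(B / c) * (τ s / g s) with hA
    set C : ℝ → ℝ := fun s => (B / c) * (κ s / g s) with hC
    set D : ℝ → Fin 3 → ℝ := fun s => A s • t s + B • n s + C s • bv s with hD
    have hgd : ∀ s ∈ I, HasDerivAt g
        ((κ s * deriv κ s + τ s * deriv τ s) / g s) s := by
      intro s hs
      have h1 : HasDerivAt (fun x => κ x ^ 2 + τ x ^ 2)
          ((2 : ℕ) * κ s ^ 1 * deriv κ s + (2 : ℕ) * τ s ^ 1 * deriv τ s) s :=
        ((hκd s hs).pow 2).add ((hτd s hs).pow 2)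
      have h2 := h1.sqrt (hg2 s hs).ne'
      have hval : ((2 : ℕ) * κ s ^ 1 * deriv κ s + (2 : ℕ) * τ s ^ 1 * deriv τ s)
          / (2 * Real.sqrt (κ s ^ 2 + τ s ^ 2))
          = (κ s * deriv κ s + τ s * deriv τ s) / g s := by
        rw [hgdef]
        push_cast
        ring_nf
      rw [← hval]
      exact h2
    have hkeyc : ∀ s ∈ I, deriv τ s * κ s - τ s * deriv κ s = c * g s ^ 3 := by
      intro s hs
      have := hσ3 s hs
      rw [hcs s hs] at this
      linarith [this]
    have hA' : ∀ s ∈ I, HasDerivAt A (-(B * κ s)) s := by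
      intro s hs
      have hg0 := (hgpos s hs).ne'
      have h3 := ((hτd s hs).div (hgd s hs) hg0).const_mul (-(B / c))
      have hval : -(B / c) * ((deriv τ s * g s - τ s
          * ((κ s * deriv κ s + τ s * deriv τ s) / g s)) / g s ^ 2) = -(B * κ s) := by
        have hk := hkeyc s hs
        have hgs := hgsq s hs
        have hκ0 := (hκpos s hs).ne'
        have hq' : deriv τ s = (c * g s ^ 3 + τ s * deriv κ s) / κ s := by
          field_simp; linear_combination hk
        rw [hq']; field_simp
        linear_combination (-(c * g s ^ 3 + τ s * deriv κ s)) * hgs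
      rw [← hval]
      exact h3
    have hC' : ∀ s ∈ I, HasDerivAt C (-(B * τ s)) s := by
      intro s hs
      have hg0 := (hgpos s hs).ne'
      have h3 := ((hκd s hs).div (hgd s hs) hg0).const_mul (B / c)
      have hval : (B / c) * ((deriv κ s * g s - κ s
          * ((κ s * deriv κ s + τ s * deriv τ s) / g s)) / g s ^ 2) = -(B * τ s) := by
        have hk := hkeyc s hs
        have hgs := hgsq s hs
        have hκ0 := (hκpos s hs).ne'
        have hq' : deriv τ s = (c * g s ^ 3 + τ s * deriv κ s) / κ s := by
          field_simp; linear_combination hk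
        rw [hq']; field_simp
        linear_combination (deriv κ s) * hgs
      rw [← hval]
      exact h3
    have hAC : ∀ s ∈ I, A s * κ s + C s * τ s = 0 := by
      intro s hs
      have hg0 := (hgpos s hs).ne'
      simp only [hA, hC]
      field_simp
      ring
    have hD0 : ∀ s ∈ I, HasDerivAt D (0 : Fin 3 → ℝ) s := by
      intro s hs
      apply hasDerivAt_pi.2
      intro i
      have h1 := (hA' s hs).mul ((hasDerivAt_pi.1 (ht' s hs)) i)
      have h2 := ((hasDerivAt_pi.1 (hn' s hs)) i).const_mul B
      have h3 := (hC' s hs).mul ((hasDerivAt_pi.1 (hb' s hs)) i)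
      have h4 := (h1.add h2).add h3
      have heq : (fun x => D x i) = fun x => A x * t x i + B * n x i + C x * bv x i := by
        funext x
        simp only [hD, Pi.add_apply, Pi.smul_apply, smul_eq_mul]
      rw [show ((0 : Fin 3 → ℝ) i) = (0 : ℝ) from rfl, heq]
      convert h4 using 1
      case e'_8 => rfl
      simp only [Pi.add_apply, Pi.smul_apply, smul_eq_mul]
      linear_combination (-(n s i)) * hAC s hs
    have hDconst : ∀ s ∈ I, D s = D s₀ := by
      intro s hs
      refine hIconv.is_const_of_fderivWithin_eq_zero
        (fun x hx => (hD0 x hx).differentiableAt.differentiableWithinAt) ?_ hs hs₀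
      intro x hx
      have h' : HasFDerivAt D (0 : ℝ →L[ℝ] (Fin 3 → ℝ)) x := by
        have h0 : (ContinuousLinearMap.smulRight (1 : ℝ →L[ℝ] ℝ) (0 : Fin 3 → ℝ))
            = (0 : ℝ →L[ℝ] (Fin 3 → ℝ)) := by ext y; simp
        have h1 : HasFDerivAt D
            (ContinuousLinearMap.smulRight (1 : ℝ →L[ℝ] ℝ) (0 : Fin 3 → ℝ)) x := hD0 x hx
        rwa [h0] at h1
      exact h'.hasFDerivWithinAt.fderivWithin (hIopen.uniqueDiffWithinAt hx)
    refine ⟨θ, hθ, D s₀, ?_, fun s hs => ?_⟩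
    · have hg0 := (hgpos s₀ hs₀).ne'
      have hgs := hgsq s₀ hs₀
      simp only [hD]
      rw [mdot_comb_left]
      simp only [mdot_comb_right]
      rw [mdot_comm (n s₀) (t s₀), mdot_comm (bv s₀) (t s₀), mdot_comm (bv s₀) (n s₀),
        htt s₀ hs₀, hnn s₀ hs₀, hbb s₀ hs₀, htn s₀ hs₀, htb s₀ hs₀, hnb s₀ hs₀]
      simp only [hA, hC]
      field_simp
      linear_combination (-(B ^ 2)) * hgs - g s₀ ^ 2 * hB2
    · rw [← hDconst s hs]
      simp only [hD]
      rw [mdot_comb_right, mdot_comm (n s) (t s), htn s hs, hnn s hs, hnb s hs, ← hBdef]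
      ring
end

section
/- (Theorem 2) Suppose α is a geodesic on M, i.e., k_g(s) = 0 for all s ∈ I, and k_n(s) > 0 on I (so that T′ = k_n·N, N is the principal normal of α, and κ = k_n, τ = τ_g). Then there exist θ > 0 and a constant vector d with ⟨d,d⟩ = −1 and ⟨N(s),d⟩ = −cosh θ for all s ∈ I (α is an isophote with timelike axis) if and only if σ(s) = (k_n²/(k_n² + τ_g²)^{3/2})·(τ_g/k_n)′(s) is a constant function with |σ| > 1 (α is a slant helix with timelike axis); in this case there is ε ∈ {−1,+1} with d = ε·(τ_g/√(k_n² + τ_g²))·sinh θ·T − ε·(k_n/√(k_n² + τ_g²))·sinh θ·B + cosh θ·N at every s ∈ I. -/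
lemma expand_basis (T B N d : Fin 3 → ℝ)
    (hTT : mdot T T = 1) (hBB : mdot B B = 1) (hNN : mdot N N = -1)
    (hTB : mdot T B = 0) (hTN : mdot T N = 0) (hBN : mdot B N = 0) :
    d = mdot T d • T + mdot B d • B - mdot N d • N := by
  simp only [mdot] at hTT hBB hNN hTB hTN hBN
  obtain ⟨A, hA⟩ : ∃ A : Matrix (Fin 3) (Fin 3) ℝ,
      A = !![-(T 0), T 1, T 2; -(B 0), B 1, B 2; -(N 0), N 1, N 2] := ⟨_, rfl⟩
  obtain ⟨M, hMdef⟩ : ∃ M : Matrix (Fin 3) (Fin 3) ℝ,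
      M = !![T 0, T 1, T 2; B 0, B 1, B 2; N 0, N 1, N 2] := ⟨_, rfl⟩
  have hG : A * M.transpose = !![1,0,0;0,1,0;0,0,-1] := by
    subst hA hMdef
    ext i j
    fin_cases i <;> fin_cases j <;>
      simp [Matrix.mul_apply, Fin.sum_univ_three, Matrix.vecHead, Matrix.vecTail, Matrix.transpose_apply, Function.comp] <;>
      linarith [hTT, hBB, hNN, hTB, hTN, hBN]
  have hdet2 : A.det * M.det = -1 := by
    rw [← Matrix.det_transpose M, ← Matrix.det_mul, hG]
    simp [Matrix.det_fin_three]
  have hdetA : A.det ≠ 0 := by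
    intro h; rw [h, zero_mul] at hdet2; norm_num at hdet2
  obtain ⟨w, hw⟩ : ∃ w : Fin 3 → ℝ,
      w = d - mdot T d • T - mdot B d • B + mdot N d • N := ⟨_, rfl⟩
  have hwc : ∀ i, w i = d i - mdot T d * T i - mdot B d * B i + mdot N d * N i := by
    intro i; rw [hw]; simp
  have hwT : -(T 0 * w 0) + T 1 * w 1 + T 2 * w 2 = 0 := by
    simp only [hwc, mdot]
    linear_combination (-(-(T 0 * d 0) + T 1 * d 1 + T 2 * d 2)) * hTT
      - (-(B 0 * d 0) + B 1 * d 1 + B 2 * d 2) * hTB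
      + (-(N 0 * d 0) + N 1 * d 1 + N 2 * d 2) * hTN
  have hwB : -(B 0 * w 0) + B 1 * w 1 + B 2 * w 2 = 0 := by
    simp only [hwc, mdot]
    linear_combination (-(-(T 0 * d 0) + T 1 * d 1 + T 2 * d 2)) * hTB
      - (-(B 0 * d 0) + B 1 * d 1 + B 2 * d 2) * hBB
      + (-(N 0 * d 0) + N 1 * d 1 + N 2 * d 2) * hBN
  have hwN : -(N 0 * w 0) + N 1 * w 1 + N 2 * w 2 = 0 := by
    simp only [hwc, mdot]
    linear_combination (-(-(T 0 * d 0) + T 1 * d 1 + T 2 * d 2)) * hTN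
      - (-(B 0 * d 0) + B 1 * d 1 + B 2 * d 2) * hBN
      + (-(N 0 * d 0) + N 1 * d 1 + N 2 * d 2) * hNN
  have hmv : A.mulVec w = 0 := by
    subst hA
    ext i
    fin_cases i <;>
      simp [Matrix.mulVec, dotProduct, Fin.sum_univ_three] <;>
      linarith [hwT, hwB, hwN]
  have hw0 : w = 0 := Matrix.eq_zero_of_mulVec_eq_zero hdetA hmv
  have h2 : d - (mdot T d • T + mdot B d • B - mdot N d • N) = w := by
    rw [hw]; abel
  rw [hw0] at h2
  exact (sub_eq_zero.mp h2)

lemma hasDerivAt_phi {kn τg : ℝ → ℝ} {kn' τg' s : ℝ}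
    (hkn : HasDerivAt kn kn' s) (hτ : HasDerivAt τg τg' s) (hpos : 0 < kn s) :
    HasDerivAt (fun u => τg u / Real.sqrt (kn u ^ 2 + τg u ^ 2))
      (kn s * ((τg' * kn s - τg s * kn') / Real.sqrt ((kn s ^ 2 + τg s ^ 2) ^ 3))) s ∧
    HasDerivAt (fun u => kn u / Real.sqrt (kn u ^ 2 + τg u ^ 2))
      (-τg s * ((τg' * kn s - τg s * kn') / Real.sqrt ((kn s ^ 2 + τg s ^ 2) ^ 3))) s := by
  have hQpos : 0 < kn s ^ 2 + τg s ^ 2 := by positivity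
  have hQ : HasDerivAt (fun u => kn u ^ 2 + τg u ^ 2)
      (2 * kn s * kn' + 2 * τg s * τg') s := by
    have : HasDerivAt (fun u => kn u ^ 2 + τg u ^ 2) _ s := ((hkn.pow 2).add (hτ.pow 2))
    convert this using 1; ring
  set r := Real.sqrt (kn s ^ 2 + τg s ^ 2) with hrdef
  have hsq : HasDerivAt (fun u => Real.sqrt (kn u ^ 2 + τg u ^ 2))
      ((2 * kn s * kn' + 2 * τg s * τg') / (2 * r)) s :=
    hQ.sqrt (ne_of_gt hQpos)
  have hrpos : 0 < r := Real.sqrt_pos.2 hQpos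
  have hr0 : r ≠ 0 := ne_of_gt hrpos
  have hQ0 : kn s ^ 2 + τg s ^ 2 ≠ 0 := ne_of_gt hQpos
  have hsqsq : r ^ 2 = kn s ^ 2 + τg s ^ 2 := Real.sq_sqrt hQpos.le
  have hcube : Real.sqrt ((kn s ^ 2 + τg s ^ 2) ^ 3) = (kn s ^ 2 + τg s ^ 2) * r := by
    rw [pow_succ, Real.sqrt_mul (by positivity), hrdef, Real.sqrt_sq hQpos.le]
  constructor
  · have h : HasDerivAt (fun u => τg u / Real.sqrt (kn u ^ 2 + τg u ^ 2)) _ s := hτ.div hsq hr0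
    have e1 : (τg' * r - τg s * ((2 * kn s * kn' + 2 * τg s * τg') / (2 * r))) / r ^ 2
        = (τg' * r ^ 2 - τg s * (kn s * kn' + τg s * τg')) / (r ^ 2 * r) := by
      field_simp
    rw [e1, hsqsq] at h
    convert h using 1
    rw [hcube]
    field_simp
    ring
  · have h : HasDerivAt (fun u => kn u / Real.sqrt (kn u ^ 2 + τg u ^ 2)) _ s := hkn.div hsq hr0
    have e1 : (kn' * r - kn s * ((2 * kn s * kn' + 2 * τg s * τg') / (2 * r))) / r ^ 2
        = (kn' * r ^ 2 - kn s * (kn s * kn' + τg s * τg')) / (r ^ 2 * r) := by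
      field_simp
    rw [e1, hsqsq] at h
    convert h using 1
    rw [hcube]
    field_simp
    ring

lemma mdot_left_lin (u v w : Fin 3 → ℝ) (p q : ℝ) :
    mdot (p • u + q • v) w = p * mdot u w + q * mdot v w := by
  simp only [mdot, Pi.add_apply, Pi.smul_apply, smul_eq_mul]; ring

lemma mdot_zero_right (u : Fin 3 → ℝ) : mdot u 0 = 0 := by simp [mdot]

lemma mdot_hasDerivAt_s13 {F G : ℝ → Fin 3 → ℝ} {F' G' : Fin 3 → ℝ} {s : ℝ}
    (hF : HasDerivAt F F' s) (hG : HasDerivAt G G' s) :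
    HasDerivAt (fun t => mdot (F t) (G t)) (mdot F' (G s) + mdot (F s) G') s := by
  have hFi : ∀ i, HasDerivAt (fun t => F t i) (F' i) s := hasDerivAt_pi.1 hF
  have hGi : ∀ i, HasDerivAt (fun t => G t i) (G' i) s := hasDerivAt_pi.1 hG
  have h : HasDerivAt (fun t => -(F t 0 * G t 0) + F t 1 * G t 1 + F t 2 * G t 2) _ s := (((hFi 0).mul (hGi 0)).neg.add ((hFi 1).mul (hGi 1))).add ((hFi 2).mul (hGi 2))
  convert h using 1
  simp only [mdot]
  ring
  simp only [mdot]
  ring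

section key
variable (a b : ℝ) (T B N : ℝ → Fin 3 → ℝ) (kn kg τg : ℝ → ℝ)

lemma key (hBs : ContDiffOn ℝ (⊤ : ℕ∞) B (Set.Ioo a b))
    (hkns : ContDiffOn ℝ (⊤ : ℕ∞) kn (Set.Ioo a b)) (hτgs : ContDiffOn ℝ (⊤ : ℕ∞) τg (Set.Ioo a b))
    (hTT : ∀ s ∈ Set.Ioo a b, mdot (T s) (T s) = 1)
    (hBB : ∀ s ∈ Set.Ioo a b, mdot (B s) (B s) = 1)
    (hNN : ∀ s ∈ Set.Ioo a b, mdot (N s) (N s) = -1)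
    (hTB : ∀ s ∈ Set.Ioo a b, mdot (T s) (B s) = 0)
    (hTN : ∀ s ∈ Set.Ioo a b, mdot (T s) (N s) = 0)
    (hBN : ∀ s ∈ Set.Ioo a b, mdot (B s) (N s) = 0)
    (hT' : ∀ s ∈ Set.Ioo a b, HasDerivAt T (kg s • B s + kn s • N s) s)
    (hN' : ∀ s ∈ Set.Ioo a b, HasDerivAt N (kn s • T s + τg s • B s) s)
    (σ : ℝ → ℝ)
    (hσ : ∀ s ∈ Set.Ioo a b, σ s =
      kn s ^ 2 / Real.sqrt ((kn s ^ 2 + τg s ^ 2) ^ 3) *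
        deriv (fun u => τg u / kn u) s)
    (hgeo : ∀ s ∈ Set.Ioo a b, kg s = 0)
    (hknpos : ∀ s ∈ Set.Ioo a b, 0 < kn s)
    (hab : a < b)
    (θ : ℝ) (hθ : 0 < θ) (d : Fin 3 → ℝ) (hdd : mdot d d = -1)
    (hNd : ∀ s ∈ Set.Ioo a b, mdot (N s) d = -Real.cosh θ) :
    ∃ ε : ℝ, (ε = 1 ∨ ε = -1) ∧ ∀ s ∈ Set.Ioo a b,
      σ s = -ε * (Real.cosh θ / Real.sinh θ) ∧
      mdot (T s) d = ε * (τg s / Real.sqrt (kn s ^ 2 + τg s ^ 2)) * Real.sinh θ ∧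
      mdot (B s) d = -ε * (kn s / Real.sqrt (kn s ^ 2 + τg s ^ 2)) * Real.sinh θ := by
  set I := Set.Ioo a b with hIdef
  set x : ℝ → ℝ := fun s => mdot (T s) d with hxdef
  set y : ℝ → ℝ := fun s => mdot (B s) d with hydef
  have hsinhpos : 0 < Real.sinh θ := Real.sinh_pos_iff.2 hθ
  have hcoshpos : 0 < Real.cosh θ := Real.cosh_pos θ
  -- derivative of x
  have hx' : ∀ s ∈ I, HasDerivAt x (-(kn s * Real.cosh θ)) s := by
    intro s hs
    have h := mdot_hasDerivAt_s13 (hT' s hs) (hasDerivAt_const s d)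
    convert h using 1
    rw [mdot_left_lin, mdot_zero_right, hgeo s hs, hNd s hs]; ring
  -- the relation kn x + τg y = 0
  have hxy : ∀ s ∈ I, kn s * x s + τg s * y s = 0 := by
    intro s hs
    have hDN := mdot_hasDerivAt_s13 (hN' s hs) (hasDerivAt_const s d)
    have hconst : HasDerivAt (fun t => mdot (N t) d) 0 s := by
      have hev : (fun t => mdot (N t) d) =ᶠ[nhds s] (fun _ => -Real.cosh θ) := by
        filter_upwards [isOpen_Ioo.mem_nhds hs] with t ht using hNd t ht
      exact (hasDerivAt_const s (-Real.cosh θ)).congr_of_eventuallyEq hev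
    have := hDN.unique hconst
    rw [mdot_left_lin, mdot_zero_right] at this
    linarith
  -- basis expansion of d
  have hexp : ∀ s ∈ I, d = x s • T s + y s • B s + Real.cosh θ • N s := by
    intro s hs
    have h := expand_basis (T s) (B s) (N s) d (hTT s hs) (hBB s hs) (hNN s hs)
      (hTB s hs) (hTN s hs) (hBN s hs)
    rw [hNd s hs] at h
    rw [h]; module
  -- x² + y² = sinh²θ
  have hsq : ∀ s ∈ I, x s ^ 2 + y s ^ 2 = Real.sinh θ ^ 2 := by
    intro s hs
    have h := mdot_comb (T s) (B s) (N s) (hTT s hs) (hBB s hs) (hNN s hs)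
      (hTB s hs) (hTN s hs) (hBN s hs) (x s) (y s) (Real.cosh θ)
      (x s) (y s) (Real.cosh θ)
    rw [← hexp s hs, hdd] at h
    have hc := Real.cosh_sq θ
    nlinarith
  -- y never vanishes
  have ynz : ∀ s ∈ I, y s ≠ 0 := by
    intro s hs h0
    have h1 := hxy s hs
    rw [h0] at h1
    have hx0 : x s = 0 := by
      have := hknpos s hs
      have : kn s * x s = 0 := by linarith
      rcases mul_eq_zero.1 this with h | h
      · exact absurd h (ne_of_gt (hknpos s hs))
      · exact h
    have := hsq s hs
    rw [hx0, h0] at this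
    nlinarith
  -- y keeps constant sign
  have ycont : ContinuousOn y I := by
    have hBc : ContinuousOn B I := hBs.continuousOn
    have h0 : ContinuousOn (fun s => B s 0) I := (continuous_apply 0).comp_continuousOn hBc
    have h1 : ContinuousOn (fun s => B s 1) I := (continuous_apply 1).comp_continuousOn hBc
    have h2 : ContinuousOn (fun s => B s 2) I := (continuous_apply 2).comp_continuousOn hBc
    have : ContinuousOn (fun s => -(B s 0 * d 0) + B s 1 * d 1 + B s 2 * d 2) I :=
      (((h0.mul continuousOn_const).neg.add (h1.mul continuousOn_const)).add
        (h2.mul continuousOn_const))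
    exact this
  have ysign : ∀ s ∈ I, ∀ t ∈ I, 0 < y s → 0 < y t := by
    intro s hs t ht hys
    by_contra hyt
    have hyt' : y t < 0 := lt_of_le_of_ne (not_lt.1 hyt) (ynz t ht)
    have hsub : Set.uIcc t s ⊆ I := (Set.ordConnected_Ioo).uIcc_subset ht hs
    have hivt := intermediate_value_uIcc (ycont.mono hsub)
    have h0m : (0:ℝ) ∈ Set.uIcc (y t) (y s) := by
      rw [Set.mem_uIcc]; left; exact ⟨hyt'.le, hys.le⟩
    obtain ⟨u, hu, hyu⟩ := hivt h0m
    exact ynz u (hsub hu) hyu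
  set s₀ := (a + b) / 2 with hs₀def
  have hs₀ : s₀ ∈ I := by constructor <;> [linarith; linarith]
  set ε : ℝ := if 0 < y s₀ then -1 else 1 with hεdef
  have hε : ε = 1 ∨ ε = -1 := by
    by_cases h : 0 < y s₀ <;> simp [hεdef, h]
  have hε2 : ε ^ 2 = 1 := by rcases hε with h | h <;> rw [h] <;> norm_num
  -- the sign dichotomy: y s = -ε * |y s|-style value
  have hyval : ∀ s ∈ I, y s = -ε * (kn s / Real.sqrt (kn s ^ 2 + τg s ^ 2)) * Real.sinh θ := by
    intro s hs
    have hQpos : 0 < kn s ^ 2 + τg s ^ 2 := by nlinarith [hknpos s hs, sq_nonneg (τg s)]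
    have hrpos : 0 < Real.sqrt (kn s ^ 2 + τg s ^ 2) := Real.sqrt_pos.2 hQpos
    have hsqsq : Real.sqrt (kn s ^ 2 + τg s ^ 2) ^ 2 = kn s ^ 2 + τg s ^ 2 :=
      Real.sq_sqrt hQpos.le
    have h1 : kn s * x s = -(τg s * y s) := by linarith [hxy s hs]
    have h2 : (kn s * x s) ^ 2 = (τg s * y s) ^ 2 := by rw [h1]; ring
    have hy2 : (y s * Real.sqrt (kn s ^ 2 + τg s ^ 2)) ^ 2 = (kn s * Real.sinh θ) ^ 2 := by
      rw [mul_pow, hsqsq]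
      linear_combination (kn s ^ 2) * (hsq s hs) - h2
    have hfact : (y s * Real.sqrt (kn s ^ 2 + τg s ^ 2) - kn s * Real.sinh θ) *
        (y s * Real.sqrt (kn s ^ 2 + τg s ^ 2) + kn s * Real.sinh θ) = 0 := by
      linear_combination hy2
    have hknsinh : 0 < kn s * Real.sinh θ := mul_pos (hknpos s hs) hsinhpos
    by_cases hpos : 0 < y s₀
    · have hys : 0 < y s := ysign s₀ hs₀ s hs hpos
      have hεval : ε = -1 := by rw [hεdef, if_pos hpos]
      have hy3 : y s * Real.sqrt (kn s ^ 2 + τg s ^ 2) = kn s * Real.sinh θ := by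
        rcases mul_eq_zero.1 hfact with h | h
        · linarith
        · have := mul_pos hys hrpos; linarith
      have hy4 : y s = kn s * Real.sinh θ / Real.sqrt (kn s ^ 2 + τg s ^ 2) := by
        rw [eq_div_iff (ne_of_gt hrpos)]; linarith [hy3]
      rw [hεval, hy4]; ring
    · have hys : y s < 0 := by
        by_contra h
        have hys' : 0 < y s := lt_of_le_of_ne (not_lt.1 h) (Ne.symm (ynz s hs))
        exact hpos (ysign s hs s₀ hs₀ hys')
      have hεval : ε = 1 := by rw [hεdef, if_neg hpos]
      have hy3 : y s * Real.sqrt (kn s ^ 2 + τg s ^ 2) = -(kn s * Real.sinh θ) := by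
        rcases mul_eq_zero.1 hfact with h | h
        · have := mul_neg_of_neg_of_pos hys hrpos; linarith
        · linarith
      have hy4 : y s = -(kn s * Real.sinh θ) / Real.sqrt (kn s ^ 2 + τg s ^ 2) := by
        rw [eq_div_iff (ne_of_gt hrpos)]; linarith [hy3]
      rw [hεval, hy4]; ring
  have hxval : ∀ s ∈ I, x s = ε * (τg s / Real.sqrt (kn s ^ 2 + τg s ^ 2)) * Real.sinh θ := by
    intro s hs
    have hQpos : 0 < kn s ^ 2 + τg s ^ 2 := by nlinarith [hknpos s hs, sq_nonneg (τg s)]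
    have hrpos : 0 < Real.sqrt (kn s ^ 2 + τg s ^ 2) := Real.sqrt_pos.2 hQpos
    have h1 : kn s * x s = -(τg s * y s) := by linarith [hxy s hs]
    rw [hyval s hs] at h1
    have hkn0 : kn s ≠ 0 := ne_of_gt (hknpos s hs)
    have hr0 : Real.sqrt (kn s ^ 2 + τg s ^ 2) ≠ 0 := ne_of_gt hrpos
    apply mul_left_cancel₀ hkn0
    field_simp at h1 ⊢
    linear_combination h1
  -- the σ computation
  refine ⟨ε, hε, fun s hs => ⟨?_, hxval s hs, hyval s hs⟩⟩
  have hQpos : 0 < kn s ^ 2 + τg s ^ 2 := by nlinarith [hknpos s hs, sq_nonneg (τg s)]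
  have hkn0 : kn s ≠ 0 := ne_of_gt (hknpos s hs)
  have hknd : HasDerivAt kn (deriv kn s) s :=
    (((hkns.contDiffAt (isOpen_Ioo.mem_nhds hs)).differentiableAt (by simp))).hasDerivAt
  have hτgd : HasDerivAt τg (deriv τg s) s :=
    (((hτgs.contDiffAt (isOpen_Ioo.mem_nhds hs)).differentiableAt (by simp))).hasDerivAt
  set σval := (deriv τg s * kn s - τg s * deriv kn s) /
    Real.sqrt ((kn s ^ 2 + τg s ^ 2) ^ 3) with hσvaldef
  have hφ := (hasDerivAt_phi hknd hτgd (hknpos s hs)).1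
  have hx2 : HasDerivAt x (ε * (kn s * σval) * Real.sinh θ) s := by
    have h := (hφ.const_mul ε).mul_const (Real.sinh θ)
    apply h.congr_of_eventuallyEq
    filter_upwards [isOpen_Ioo.mem_nhds hs] with t ht
    rw [hxval t ht]
  have huniq := (hx' s hs).unique hx2
  have hσs : σ s = σval := by
    rw [hσ s hs, (show HasDerivAt (fun u => τg u / kn u) _ s from hτgd.div hknd hkn0).deriv, hσvaldef]
    have h3 : Real.sqrt ((kn s ^ 2 + τg s ^ 2) ^ 3) ≠ 0 :=
      ne_of_gt (Real.sqrt_pos.2 (by positivity : (0:ℝ) < (kn s ^ 2 + τg s ^ 2) ^ 3))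
    field_simp
  rw [hσs]
  have hsinh0 : Real.sinh θ ≠ 0 := ne_of_gt hsinhpos
  have h5 : ε * σval * Real.sinh θ = -Real.cosh θ :=
    mul_left_cancel₀ hkn0 (by linear_combination -huniq)
  have h6 : σval * Real.sinh θ = -ε * Real.cosh θ := by
    linear_combination ε * h5 - σval * Real.sinh θ * hε2
  have h7 : σval = -ε * Real.cosh θ / Real.sinh θ := by
    rw [eq_div_iff hsinh0]; linarith [h6]
  rw [h7]; ring
end key

/-- **Theorem 2.** If `α` is a geodesic on `M` (`k_g ≡ 0`) with `k_n > 0` on `I`,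
then `α` is an isophote curve with a timelike axis if and only if `α` is a slant
helix with timelike axis, i.e. `σ(s) = (k_n²/(k_n² + τ_g²)^{3/2})·(τ_g/k_n)′(s)` is
constant with `|σ| > 1`; and in this case the axis is, up to a global sign `ε`,
`d = ε·(τ_g/√(k_n²+τ_g²))·sinh θ·T − ε·(k_n/√(k_n²+τ_g²))·sinh θ·B + cosh θ·N`. -/
theorem statement13
    -- the open interval `I`
    (a b : ℝ) (hab : a < b) (I : Set ℝ) (hI : I = Set.Ioo a b)
    -- the Darboux frame `T, B, N` of a unit-speed spacelike curve on a spacelike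
    -- surface, with normal curvature `kn`, geodesic curvature `kg` and geodesic
    -- torsion `τg`
    (T B N : ℝ → Fin 3 → ℝ) (kn kg τg : ℝ → ℝ)
    (hTs : ContDiffOn ℝ (⊤ : ℕ∞) T I) (hBs : ContDiffOn ℝ (⊤ : ℕ∞) B I) (hNs : ContDiffOn ℝ (⊤ : ℕ∞) N I)
    (hkns : ContDiffOn ℝ (⊤ : ℕ∞) kn I) (hkgs : ContDiffOn ℝ (⊤ : ℕ∞) kg I)
    (hτgs : ContDiffOn ℝ (⊤ : ℕ∞) τg I)
    (hTT : ∀ s ∈ I, mdot (T s) (T s) = 1)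
    (hBB : ∀ s ∈ I, mdot (B s) (B s) = 1)
    (hNN : ∀ s ∈ I, mdot (N s) (N s) = -1)
    (hTB : ∀ s ∈ I, mdot (T s) (B s) = 0)
    (hTN : ∀ s ∈ I, mdot (T s) (N s) = 0)
    (hBN : ∀ s ∈ I, mdot (B s) (N s) = 0)
    -- the Darboux frame equations
    (hT' : ∀ s ∈ I, HasDerivAt T (kg s • B s + kn s • N s) s)
    (hB' : ∀ s ∈ I, HasDerivAt B ((-kg s) • T s + τg s • N s) s)
    (hN' : ∀ s ∈ I, HasDerivAt N (kn s • T s + τg s • B s) s)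
    -- `σ(s) = (k_n²/(k_n² + τ_g²)^{3/2})·(τ_g/k_n)′(s)`
    (σ : ℝ → ℝ)
    (hσ : ∀ s ∈ I, σ s =
      kn s ^ 2 / Real.sqrt ((kn s ^ 2 + τg s ^ 2) ^ 3) *
        deriv (fun u => τg u / kn u) s)
    -- `α` is a geodesic with positive normal curvature
    (hgeo : ∀ s ∈ I, kg s = 0) (hknpos : ∀ s ∈ I, 0 < kn s) :
    ((∃ θ : ℝ, 0 < θ ∧ ∃ d : Fin 3 → ℝ, mdot d d = -1 ∧
        ∀ s ∈ I, mdot (N s) d = -Real.cosh θ) ↔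
      (∃ c : ℝ, 1 < |c| ∧ ∀ s ∈ I, σ s = c)) ∧
    (∀ θ : ℝ, 0 < θ → ∀ d : Fin 3 → ℝ, mdot d d = -1 →
      (∀ s ∈ I, mdot (N s) d = -Real.cosh θ) →
      ∃ ε : ℝ, (ε = 1 ∨ ε = -1) ∧ ∀ s ∈ I,
        d = (ε * (τg s / Real.sqrt (kn s ^ 2 + τg s ^ 2)) * Real.sinh θ) • T s
            - (ε * (kn s / Real.sqrt (kn s ^ 2 + τg s ^ 2)) * Real.sinh θ) • B s
            + Real.cosh θ • N s) := by
  subst hI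
  have hmid : (a + b) / 2 ∈ Set.Ioo a b := ⟨by linarith, by linarith⟩
  constructor
  · constructor
    · -- isophote → slant helix
      rintro ⟨θ, hθ, d, hdd, hNd⟩
      obtain ⟨ε, hε, hall⟩ := key a b T B N kn kg τg hBs hkns hτgs hTT hBB hNN hTB
        hTN hBN hT' hN' σ hσ hgeo hknpos hab θ hθ d hdd hNd
      refine ⟨-ε * (Real.cosh θ / Real.sinh θ), ?_, fun s hs => (hall s hs).1⟩
      have hsinhpos : 0 < Real.sinh θ := Real.sinh_pos_iff.2 hθ
      have hlt : Real.sinh θ < Real.cosh θ := by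
        nlinarith [Real.cosh_sq θ, Real.cosh_pos θ]
      have h1 : 1 < Real.cosh θ / Real.sinh θ := (one_lt_div hsinhpos).2 hlt
      have hqpos : 0 < Real.cosh θ / Real.sinh θ :=
        div_pos (Real.cosh_pos θ) hsinhpos
      rcases hε with h | h
      · rw [h, neg_one_mul, abs_neg, abs_of_pos hqpos]; exact h1
      · rw [h]; norm_num; rw [abs_of_pos hqpos]; exact h1
    · -- slant helix → isophote
      rintro ⟨c, hc, hσc⟩
      have hc2 : 1 < c ^ 2 := by
        have := sq_abs c; nlinarith
      have hcm1 : 0 < c ^ 2 - 1 := by linarith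
      have hrt : 0 < Real.sqrt (c ^ 2 - 1) := Real.sqrt_pos.2 hcm1
      set θ := Real.arsinh (1 / Real.sqrt (c ^ 2 - 1)) with hθdef
      have hsinh : Real.sinh θ = 1 / Real.sqrt (c ^ 2 - 1) := Real.sinh_arsinh _
      have hsinhpos : 0 < Real.sinh θ := by rw [hsinh]; positivity
      have hθpos : 0 < θ := Real.sinh_pos_iff.1 hsinhpos
      have hcosh2 : Real.cosh θ ^ 2 = c ^ 2 * Real.sinh θ ^ 2 := by
        rw [Real.cosh_sq, hsinh]
        have h' := Real.sq_sqrt hcm1.le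
        field_simp [h']
        rw [h']; ring
      set ε : ℝ := if 0 ≤ c then -1 else 1 with hεdef
      have hε : ε = 1 ∨ ε = -1 := by
        by_cases h : 0 ≤ c <;> simp [hεdef, h]
      have hkey : ε * c * Real.sinh θ + Real.cosh θ = 0 := by
        by_cases h : 0 ≤ c
        · have hεv : ε = -1 := by rw [hεdef, if_pos h]
          have hcoshval : Real.cosh θ = c * Real.sinh θ := by
            have hf : (Real.cosh θ - c * Real.sinh θ) *
                (Real.cosh θ + c * Real.sinh θ) = 0 := by linear_combination hcosh2
            rcases mul_eq_zero.1 hf with h' | h'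
            · linarith
            · exfalso
              have := mul_nonneg h hsinhpos.le
              linarith [Real.cosh_pos θ]
          rw [hεv, hcoshval]; ring
        · have hεv : ε = 1 := by rw [hεdef, if_neg h]
          push_neg at h
          have hcoshval : Real.cosh θ = -c * Real.sinh θ := by
            have hf : (Real.cosh θ - -c * Real.sinh θ) *
                (Real.cosh θ + -c * Real.sinh θ) = 0 := by linear_combination hcosh2
            rcases mul_eq_zero.1 hf with h' | h'
            · linarith
            · exfalso
              have := mul_pos (neg_pos.2 h) hsinhpos
              linarith [Real.cosh_pos θ]
          rw [hεv, hcoshval]; ring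
      set p : ℝ → ℝ :=
        fun u => ε * Real.sinh θ * (τg u / Real.sqrt (kn u ^ 2 + τg u ^ 2)) with hpdef
      set q : ℝ → ℝ :=
        fun u => -(ε * Real.sinh θ) * (kn u / Real.sqrt (kn u ^ 2 + τg u ^ 2)) with hqdef
      set D : ℝ → Fin 3 → ℝ :=
        fun u => p u • T u + q u • B u + Real.cosh θ • N u with hDdef
      have hD' : ∀ s ∈ Set.Ioo a b, HasDerivAt D 0 s := by
        intro s hs
        have hknd : HasDerivAt kn (deriv kn s) s :=
          ((hkns.contDiffAt (isOpen_Ioo.mem_nhds hs)).differentiableAt (by simp)).hasDerivAt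
        have hτgd : HasDerivAt τg (deriv τg s) s :=
          ((hτgs.contDiffAt (isOpen_Ioo.mem_nhds hs)).differentiableAt (by simp)).hasDerivAt
        have hQpos : 0 < kn s ^ 2 + τg s ^ 2 := by
          nlinarith [hknpos s hs, sq_nonneg (τg s)]
        have hkn0 : kn s ≠ 0 := ne_of_gt (hknpos s hs)
        have hQ30 : Real.sqrt ((kn s ^ 2 + τg s ^ 2) ^ 3) ≠ 0 :=
          ne_of_gt (Real.sqrt_pos.2 (by positivity))
        have hσval : (deriv τg s * kn s - τg s * deriv kn s) /
            Real.sqrt ((kn s ^ 2 + τg s ^ 2) ^ 3) = c := by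
          rw [← hσc s hs, hσ s hs, (show HasDerivAt (fun u => τg u / kn u) _ s from hτgd.div hknd hkn0).deriv]
          field_simp
        have hφ := (hasDerivAt_phi hknd hτgd (hknpos s hs)).1
        have hψ := (hasDerivAt_phi hknd hτgd (hknpos s hs)).2
        rw [hσval] at hφ hψ
        have hp' : HasDerivAt p (ε * Real.sinh θ * (kn s * c)) s :=
          hφ.const_mul _
        have hq' : HasDerivAt q (-(ε * Real.sinh θ) * (-τg s * c)) s :=
          hψ.const_mul _
        have h1 := hp'.smul (hT' s hs)
        have h2 := hq'.smul (hB' s hs)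
        have h3 := (hN' s hs).const_smul (Real.cosh θ)
        have hsum := (h1.add h2).add h3
        have hVeq : p s • (kg s • B s + kn s • N s) +
              (ε * Real.sinh θ * (kn s * c)) • T s +
              (q s • ((-kg s) • T s + τg s • N s) +
                (-(ε * Real.sinh θ) * (-τg s * c)) • B s) +
              Real.cosh θ • (kn s • T s + τg s • B s) = 0 := by
          funext i
          have hsq0 : Real.sqrt (kn s ^ 2 + τg s ^ 2) ≠ 0 :=
            ne_of_gt (Real.sqrt_pos.2 hQpos)
          simp only [Pi.add_apply, Pi.smul_apply, Pi.zero_apply, smul_eq_mul,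
            hpdef, hqdef, hgeo s hs]
          field_simp
          linear_combination ((kn s * T s i + τg s * B s i) *
            Real.sqrt (kn s ^ 2 + τg s ^ 2)) * hkey
        rw [hVeq] at hsum
        exact hsum
      have hconst : ∀ s ∈ Set.Ioo a b, D s = D ((a + b) / 2) := by
        intro s hs
        have hdiff : DifferentiableOn ℝ D (Set.Ioo a b) := fun u hu =>
          ((hD' u hu).differentiableAt).differentiableWithinAt
        have hzero : ∀ u ∈ Set.Ioo a b, fderivWithin ℝ D (Set.Ioo a b) u = 0 := by
          intro u hu
          rw [fderivWithin_of_isOpen isOpen_Ioo hu, (hD' u hu).hasFDerivAt.fderiv]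
          ext v
          simp
        exact (convex_Ioo a b).is_const_of_fderivWithin_eq_zero hdiff hzero hs hmid
      set m := (a + b) / 2 with hmdef
      refine ⟨θ, hθpos, D m, ?_, ?_⟩
      · -- mdot (D m) (D m) = -1
        have hcomb := mdot_comb (T m) (B m) (N m) (hTT m hmid) (hBB m hmid)
          (hNN m hmid) (hTB m hmid) (hTN m hmid) (hBN m hmid)
          (p m) (q m) (Real.cosh θ) (p m) (q m) (Real.cosh θ)
        have hQm : 0 < kn m ^ 2 + τg m ^ 2 := by
          nlinarith [hknpos m hmid, sq_nonneg (τg m)]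
        have hsqm0 : Real.sqrt (kn m ^ 2 + τg m ^ 2) ≠ 0 :=
          ne_of_gt (Real.sqrt_pos.2 hQm)
        have hsqm : Real.sqrt (kn m ^ 2 + τg m ^ 2) ^ 2 = kn m ^ 2 + τg m ^ 2 :=
          Real.sq_sqrt hQm.le
        have hpq : p m ^ 2 + q m ^ 2 = Real.sinh θ ^ 2 := by
          have hε2 : ε ^ 2 = 1 := by rcases hε with h | h <;> rw [h] <;> norm_num
          simp only [hpdef, hqdef]
          field_simp
          linear_combination (kn m ^ 2 + τg m ^ 2) * hε2 - hsqm
        show mdot (D m) (D m) = -1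
        simp only [hDdef]
        rw [hcomb]
        linear_combination hpq - Real.cosh_sq θ
      · intro s hs
        have hcomb := mdot_comb (T s) (B s) (N s) (hTT s hs) (hBB s hs)
          (hNN s hs) (hTB s hs) (hTN s hs) (hBN s hs)
          0 0 1 (p s) (q s) (Real.cosh θ)
        simp only [zero_smul, one_smul, zero_add, zero_mul, one_mul] at hcomb
        rw [← hconst s hs]
        simp only [hDdef]
        rw [hcomb]
        ring
  · -- the axis formula
    intro θ hθpos d hdd hNd
    obtain ⟨ε, hε, hall⟩ := key a b T B N kn kg τg hBs hkns hτgs hTT hBB hNN hTB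
      hTN hBN hT' hN' σ hσ hgeo hknpos hab θ hθpos d hdd hNd
    refine ⟨ε, hε, fun s hs => ?_⟩
    have hexp := expand_basis (T s) (B s) (N s) d (hTT s hs) (hBB s hs)
      (hNN s hs) (hTB s hs) (hTN s hs) (hBN s hs)
    rw [hNd s hs, (hall s hs).2.1, (hall s hs).2.2] at hexp
    rw [hexp]
    module
end

section
/- Let θ ∈ ℝ and let d ∈ ℝ³ be a constant vector with ⟨d,d⟩ = 1 (a spacelike unit vector) such that ⟨N(s),d⟩ = sinh θ for all s ∈ I. Then there exists a sign ε ∈ {−1, +1} such that for every s ∈ I, d = ε·(τ_g/√(k_n² + τ_g²))·cosh θ·T(s) − ε·(k_n/√(k_n² + τ_g²))·cosh θ·B(s) − sinh θ·N(s), where k_n, τ_g are evaluated at s. -/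
lemma mdot_combo_left (u v w x : Fin 3 → ℝ) (c1 c2 c3 : ℝ) :
    mdot (c1 • u + c2 • v + c3 • w) x
      = c1 * mdot u x + c2 * mdot v x + c3 * mdot w x := by
  simp only [mdot, Pi.add_apply, Pi.smul_apply, smul_eq_mul]; ring

lemma mdot_combo_left' (u v w x : Fin 3 → ℝ) (c1 c2 c3 : ℝ) :
    mdot (c1 • u + c2 • v - c3 • w) x
      = c1 * mdot u x + c2 * mdot v x - c3 * mdot w x := by
  simp only [mdot, Pi.add_apply, Pi.sub_apply, Pi.smul_apply, smul_eq_mul]; ring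

lemma mdot_sub_left (x y z : Fin 3 → ℝ) :
    mdot (x - y) z = mdot x z - mdot y z := by
  simp only [mdot, Pi.sub_apply]; ring

lemma mdot_two_left (u v x : Fin 3 → ℝ) (c1 c2 : ℝ) :
    mdot (c1 • u + c2 • v) x = c1 * mdot u x + c2 * mdot v x := by
  simp only [mdot, Pi.add_apply, Pi.smul_apply, smul_eq_mul]; ring

/-- If `d` is a constant spacelike unit vector with `⟨N,d⟩ = sinh θ` along the
curve, then, up to a global sign `ε`,
`d = ε·(τ_g/√(k_n²+τ_g²))·cosh θ·T − ε·(k_n/√(k_n²+τ_g²))·cosh θ·B − sinh θ·N`. -/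
theorem statement14
    -- the open interval `I`
    (a b : ℝ) (hab : a < b) (I : Set ℝ) (hI : I = Set.Ioo a b)
    -- the Darboux frame `T, B, N` of a unit-speed spacelike curve on a spacelike
    -- surface, with normal curvature `kn`, geodesic curvature `kg` and geodesic
    -- torsion `τg`
    (T B N : ℝ → Fin 3 → ℝ) (kn kg τg : ℝ → ℝ)
    (hTs : ContDiffOn ℝ (⊤ : ℕ∞) T I) (hBs : ContDiffOn ℝ (⊤ : ℕ∞) B I) (hNs : ContDiffOn ℝ (⊤ : ℕ∞) N I)
    (hkns : ContDiffOn ℝ (⊤ : ℕ∞) kn I) (hkgs : ContDiffOn ℝ (⊤ : ℕ∞) kg I)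
    (hτgs : ContDiffOn ℝ (⊤ : ℕ∞) τg I)
    (hTT : ∀ s ∈ I, mdot (T s) (T s) = 1)
    (hBB : ∀ s ∈ I, mdot (B s) (B s) = 1)
    (hNN : ∀ s ∈ I, mdot (N s) (N s) = -1)
    (hTB : ∀ s ∈ I, mdot (T s) (B s) = 0)
    (hTN : ∀ s ∈ I, mdot (T s) (N s) = 0)
    (hBN : ∀ s ∈ I, mdot (B s) (N s) = 0)
    -- the Darboux frame equations
    (hT' : ∀ s ∈ I, HasDerivAt T (kg s • B s + kn s • N s) s)
    (hB' : ∀ s ∈ I, HasDerivAt B ((-kg s) • T s + τg s • N s) s)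
    (hN' : ∀ s ∈ I, HasDerivAt N (kn s • T s + τg s • B s) s)
    -- `k_n` never vanishes on `I`
    (hkn0 : ∀ s ∈ I, kn s ≠ 0)
    -- `d` is a constant spacelike unit vector with `⟨N,d⟩ = sinh θ` along the curve
    (θ : ℝ) (d : Fin 3 → ℝ) (hdd : mdot d d = 1)
    (hNd : ∀ s ∈ I, mdot (N s) d = Real.sinh θ)
    :
    ∃ ε : ℝ, (ε = 1 ∨ ε = -1) ∧ ∀ s ∈ I,
      d = (ε * (τg s / Real.sqrt (kn s ^ 2 + τg s ^ 2)) * Real.cosh θ) • T s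
          - (ε * (kn s / Real.sqrt (kn s ^ 2 + τg s ^ 2)) * Real.cosh θ) • B s
          - Real.sinh θ • N s := by
  subst hI
  have hIopen : IsOpen (Set.Ioo a b) := isOpen_Ioo
  have hcosh : (0:ℝ) < Real.cosh θ := Real.cosh_pos θ
  -- positivity of k_n² + τ_g²
  have hsum : ∀ s ∈ Set.Ioo a b, 0 < kn s ^ 2 + τg s ^ 2 := by
    intro s hs
    have h1 : 0 < kn s ^ 2 :=
      lt_of_le_of_ne (sq_nonneg _) (Ne.symm (pow_ne_zero 2 (hkn0 s hs)))
    nlinarith [sq_nonneg (τg s)]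
  have hrpos : ∀ s ∈ Set.Ioo a b, 0 < Real.sqrt (kn s ^ 2 + τg s ^ 2) := by
    intro s hs; exact Real.sqrt_pos.mpr (hsum s hs)
  have hrr : ∀ s ∈ Set.Ioo a b,
      Real.sqrt (kn s ^ 2 + τg s ^ 2) * Real.sqrt (kn s ^ 2 + τg s ^ 2)
        = kn s ^ 2 + τg s ^ 2 := by
    intro s hs; exact Real.mul_self_sqrt (le_of_lt (hsum s hs))
  -- derivative of s ↦ ⟨N s, d⟩
  have horth : ∀ s ∈ Set.Ioo a b,
      kn s * mdot (T s) d + τg s * mdot (B s) d = 0 := by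
    intro s hs
    have h := hasDerivAt_pi.mp (hN' s hs)
    have h1 : HasDerivAt (fun t => mdot (N t) d)
        (mdot (kn s • T s + τg s • B s) d) s := by
      have := ((((h 0).mul_const (d 0)).fun_neg.fun_add ((h 1).mul_const (d 1))).fun_add
        ((h 2).mul_const (d 2)))
      simpa [mdot] using this
    have hev : (fun t => mdot (N t) d) =ᶠ[nhds s] fun _ => Real.sinh θ :=
      Filter.eventuallyEq_of_mem (hIopen.mem_nhds hs) (fun t ht => hNd t ht)
    have h2 : HasDerivAt (fun t => mdot (N t) d) 0 s :=
      (hasDerivAt_const s (Real.sinh θ)).congr_of_eventuallyEq hev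
    have h3 := h1.unique h2
    rw [mdot_two_left] at h3
    linarith
  -- expansion of d in the frame
  have hd_eq : ∀ s ∈ Set.Ioo a b,
      d = (mdot (T s) d) • T s + (mdot (B s) d) • B s - Real.sinh θ • N s := by
    intro s hs
    set c : Fin 3 → ℝ :=
      (mdot (T s) d) • T s + (mdot (B s) d) • B s - Real.sinh θ • N s with hc
    set e : Fin 3 → ℝ := d - c with he
    suffices he0 : e = 0 by
      have : d - c = 0 := by rw [← he]; exact he0
      exact (sub_eq_zero.mp this)
    have heT : mdot e (T s) = 0 := by
      rw [he, mdot_sub_left, hc, mdot_combo_left']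
      rw [hTT s hs, mdot_comm (B s) (T s), hTB s hs, mdot_comm (N s) (T s),
        hTN s hs, mdot_comm d (T s)]
      ring
    have heB : mdot e (B s) = 0 := by
      rw [he, mdot_sub_left, hc, mdot_combo_left']
      rw [hBB s hs, hTB s hs, mdot_comm (N s) (B s), hBN s hs, mdot_comm d (B s)]
      ring
    have heN : mdot e (N s) = 0 := by
      rw [he, mdot_sub_left, hc, mdot_combo_left']
      rw [hNN s hs, hTN s hs, hBN s hs, mdot_comm d (N s), hNd s hs]
      ring
    -- T, B, N form a basis
    have hli : LinearIndependent ℝ ![T s, B s, N s] := by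
      rw [Fintype.linearIndependent_iff]
      intro g hg
      rw [Fin.sum_univ_three] at hg
      simp only [Matrix.cons_val_zero, Matrix.cons_val_one, Matrix.head_cons,
        Matrix.cons_val_two, Matrix.tail_cons] at hg
      have hT0 : mdot (g 0 • T s + g 1 • B s + g 2 • N s) (T s) = 0 := by
        rw [hg]; simp [mdot]
      have hB0 : mdot (g 0 • T s + g 1 • B s + g 2 • N s) (B s) = 0 := by
        rw [hg]; simp [mdot]
      have hN0 : mdot (g 0 • T s + g 1 • B s + g 2 • N s) (N s) = 0 := by
        rw [hg]; simp [mdot]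
      rw [mdot_combo_left, hTT s hs, mdot_comm (B s) (T s), hTB s hs,
        mdot_comm (N s) (T s), hTN s hs] at hT0
      rw [mdot_combo_left, hBB s hs, hTB s hs, mdot_comm (N s) (B s),
        hBN s hs] at hB0
      rw [mdot_combo_left, hNN s hs, hTN s hs, hBN s hs] at hN0
      intro i
      fin_cases i
      · simpa using by linarith
      · simpa using by linarith
      · simpa using by linarith
    have hspan : Submodule.span ℝ (Set.range ![T s, B s, N s]) = ⊤ :=
      hli.span_eq_top_of_card_eq_finrank (by simp)
    -- the linear functional x ↦ mdot e x
    let L : (Fin 3 → ℝ) →ₗ[ℝ] ℝ :=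
      { toFun := fun x => mdot e x
        map_add' := by intro x y; simp only [mdot, Pi.add_apply]; ring
        map_smul' := by intro m x; simp only [mdot, Pi.smul_apply, smul_eq_mul,
          RingHom.id_apply]; ring }
    have hall : ∀ x : Fin 3 → ℝ, mdot e x = 0 := by
      have hsub : Set.range ![T s, B s, N s] ⊆ (LinearMap.ker L : Set (Fin 3 → ℝ)) := by
        intro x hx
        rcases hx with ⟨i, rfl⟩
        fin_cases i <;> simp only [LinearMap.mem_ker, SetLike.mem_coe] <;>
          first
          | exact heT
          | exact heB
          | exact heN
      have hker : Submodule.span ℝ (Set.range ![T s, B s, N s]) ≤ LinearMap.ker L :=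
        Submodule.span_le.mpr hsub
      rw [hspan] at hker
      intro x
      have : x ∈ LinearMap.ker L := hker Submodule.mem_top
      simpa [L, LinearMap.mem_ker] using this
    have h0 := hall ![1, 0, 0]
    have h1 := hall ![0, 1, 0]
    have h2 := hall ![0, 0, 1]
    simp [mdot] at h0 h1 h2
    funext i
    fin_cases i
    · simpa using h0
    · simpa using h1
    · simpa using h2
  -- norm relation: f² + g² = cosh² θ
  have hnorm : ∀ s ∈ Set.Ioo a b,
      (mdot (T s) d) ^ 2 + (mdot (B s) d) ^ 2 = Real.cosh θ ^ 2 := by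
    intro s hs
    have key : mdot ((mdot (T s) d) • T s + (mdot (B s) d) • B s
        - Real.sinh θ • N s) d = 1 := by
      rw [← hd_eq s hs]; exact hdd
    rw [mdot_combo_left'] at key
    rw [hNd s hs] at key
    nlinarith [Real.cosh_sq θ, key]
  -- the sign function
  set E : ℝ → ℝ := fun s =>
    (mdot (T s) d * τg s - mdot (B s) d * kn s)
      / (Real.cosh θ * Real.sqrt (kn s ^ 2 + τg s ^ 2)) with hE
  have hEsq : ∀ s ∈ Set.Ioo a b, E s * E s = 1 := by
    intro s hs
    have h1 := horth s hs
    have h2 := hnorm s hs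
    have hr := hrpos s hs
    have hrr' := hrr s hs
    simp only [hE]
    field_simp
    linear_combination (kn s ^ 2 + τg s ^ 2) * h2
      - (kn s * mdot (T s) d + τg s * mdot (B s) d) * h1 - Real.cosh θ ^ 2 * hrr'
  have hEpm : ∀ s ∈ Set.Ioo a b, E s = 1 ∨ E s = -1 := fun s hs =>
    mul_self_eq_one_iff.mp (hEsq s hs)
  -- the coefficient formulas
  have hfE : ∀ s ∈ Set.Ioo a b,
      mdot (T s) d
        = E s * (τg s / Real.sqrt (kn s ^ 2 + τg s ^ 2)) * Real.cosh θ := by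
    intro s hs
    have h1 := horth s hs
    have hr := hrpos s hs
    have hrr' := hrr s hs
    simp only [hE]
    field_simp
    linear_combination mdot (T s) d * hrr' + kn s * h1
  have hgE : ∀ s ∈ Set.Ioo a b,
      mdot (B s) d
        = -(E s * (kn s / Real.sqrt (kn s ^ 2 + τg s ^ 2)) * Real.cosh θ) := by
    intro s hs
    have h1 := horth s hs
    have hr := hrpos s hs
    have hrr' := hrr s hs
    simp only [hE]
    field_simp
    linear_combination mdot (B s) d * hrr' + τg s * h1
  -- continuity of E on I
  have hTc : ContinuousOn (fun s => mdot (T s) d) (Set.Ioo a b) := by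
    have h := hTs.continuousOn
    simp only [mdot]
    exact ((((continuous_apply 0).comp_continuousOn h).mul continuousOn_const).neg.add
      (((continuous_apply 1).comp_continuousOn h).mul continuousOn_const)).add
      (((continuous_apply 2).comp_continuousOn h).mul continuousOn_const)
  have hBc : ContinuousOn (fun s => mdot (B s) d) (Set.Ioo a b) := by
    have h := hBs.continuousOn
    simp only [mdot]
    exact ((((continuous_apply 0).comp_continuousOn h).mul continuousOn_const).neg.add
      (((continuous_apply 1).comp_continuousOn h).mul continuousOn_const)).add
      (((continuous_apply 2).comp_continuousOn h).mul continuousOn_const)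
  have hEc : ContinuousOn E (Set.Ioo a b) := by
    rw [hE]
    apply ContinuousOn.div
    · exact (hTc.mul hτgs.continuousOn).sub (hBc.mul hkns.continuousOn)
    · exact continuousOn_const.mul (Real.continuous_sqrt.comp_continuousOn
        ((hkns.continuousOn.pow 2).add (hτgs.continuousOn.pow 2)))
    · intro s hs; exact ne_of_gt (mul_pos hcosh (hrpos s hs))
  -- E is constant on I
  obtain ⟨s₀, hs₀⟩ : ∃ s, s ∈ Set.Ioo a b := ⟨(a + b) / 2, by constructor <;> linarith⟩
  have key : ∀ u v : ℝ, u ∈ Set.Ioo a b → v ∈ Set.Ioo a b → u ≤ v → E u ≠ E v → False := by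
    intro u v hu hv huv hne
    have hsub : Set.Icc u v ⊆ Set.Ioo a b := Set.Icc_subset_Ioo hu.1 hv.2
    have hc : ContinuousOn E (Set.Icc u v) := hEc.mono hsub
    rcases hEpm u hu with h1 | h1 <;> rcases hEpm v hv with h2 | h2
    · exact hne (h1.trans h2.symm)
    · obtain ⟨t, ht, h0⟩ := intermediate_value_Icc' huv hc
        (show (0:ℝ) ∈ Set.Icc (E v) (E u) by rw [h1, h2]; norm_num)
      have := hEsq t (hsub ht)
      rw [h0] at this; norm_num at this
    · obtain ⟨t, ht, h0⟩ := intermediate_value_Icc huv hc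
        (show (0:ℝ) ∈ Set.Icc (E u) (E v) by rw [h1, h2]; norm_num)
      have := hEsq t (hsub ht)
      rw [h0] at this; norm_num at this
    · exact hne (h1.trans h2.symm)
  have hconst : ∀ s ∈ Set.Ioo a b, E s = E s₀ := by
    intro s hs
    by_contra hne
    rcases le_total s s₀ with h | h
    · exact key s s₀ hs hs₀ h hne
    · exact key s₀ s hs₀ hs h (fun hh => hne hh.symm)
  -- conclusion
  refine ⟨E s₀, hEpm s₀ hs₀, fun s hs => ?_⟩
  have h := hd_eq s hs
  rw [hfE s hs, hgE s hs, hconst s hs] at h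
  rw [h]
  module
end

section
/- Suppose ψ is constant on I with |ψ| < 1, and choose ε ∈ {−1,+1} and θ ∈ ℝ such that ψ = ε·tanh θ. Then the map d : I → ℝ³ defined by d(s) = ε·(τ_g/√(k_n² + τ_g²))·cosh θ·T(s) − ε·(k_n/√(k_n² + τ_g²))·cosh θ·B(s) − sinh θ·N(s) satisfies d′(s) = 0 for all s ∈ I; hence d is a constant vector with ⟨d,d⟩ = 1 (a spacelike unit vector) and ⟨N(s),d⟩ = sinh θ for all s ∈ I. -/
set_option maxHeartbeats 1000000


/-- If `ψ` is constant on `I` with `|ψ| < 1` and `ψ = ε·tanh θ` for a sign `ε` and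
`θ ∈ ℝ`, then the map
`d(s) = ε·(τ_g/√(k_n²+τ_g²))·cosh θ·T − ε·(k_n/√(k_n²+τ_g²))·cosh θ·B − sinh θ·N`
has vanishing derivative on `I`, hence is a constant spacelike unit vector with
`⟨N,d⟩ = sinh θ` along the curve. -/
theorem statement16
    -- the open interval `I`
    (a b : ℝ) (hab : a < b) (I : Set ℝ) (hI : I = Set.Ioo a b)
    -- the Darboux frame `T, B, N` of a unit-speed spacelike curve on a spacelike
    -- surface, with normal curvature `kn`, geodesic curvature `kg` and geodesic
    -- torsion `τg`
    (T B N : ℝ → Fin 3 → ℝ) (kn kg τg : ℝ → ℝ)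
    (hTs : ContDiffOn ℝ (⊤ : ℕ∞) T I) (hBs : ContDiffOn ℝ (⊤ : ℕ∞) B I) (hNs : ContDiffOn ℝ (⊤ : ℕ∞) N I)
    (hkns : ContDiffOn ℝ (⊤ : ℕ∞) kn I) (hkgs : ContDiffOn ℝ (⊤ : ℕ∞) kg I)
    (hτgs : ContDiffOn ℝ (⊤ : ℕ∞) τg I)
    (hTT : ∀ s ∈ I, mdot (T s) (T s) = 1)
    (hBB : ∀ s ∈ I, mdot (B s) (B s) = 1)
    (hNN : ∀ s ∈ I, mdot (N s) (N s) = -1)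
    (hTB : ∀ s ∈ I, mdot (T s) (B s) = 0)
    (hTN : ∀ s ∈ I, mdot (T s) (N s) = 0)
    (hBN : ∀ s ∈ I, mdot (B s) (N s) = 0)
    -- the Darboux frame equations
    (hT' : ∀ s ∈ I, HasDerivAt T (kg s • B s + kn s • N s) s)
    (hB' : ∀ s ∈ I, HasDerivAt B ((-kg s) • T s + τg s • N s) s)
    (hN' : ∀ s ∈ I, HasDerivAt N (kn s • T s + τg s • B s) s)
    -- `k_n` never vanishes on `I`
    (hkn0 : ∀ s ∈ I, kn s ≠ 0)
    -- `ψ(s) = (k_n²/(k_n² + τ_g²)^{3/2})·(τ_g/k_n)′(s) + k_g(s)/(k_n² + τ_g²)^{1/2}`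
    (ψ : ℝ → ℝ)
    (hψ : ∀ s ∈ I, ψ s =
      kn s ^ 2 / Real.sqrt ((kn s ^ 2 + τg s ^ 2) ^ 3) *
        deriv (fun u => τg u / kn u) s +
      kg s / Real.sqrt (kn s ^ 2 + τg s ^ 2))
    -- `ψ` is constant with `|ψ| < 1`, `ψ = ε·tanh θ`
    (c : ℝ) (hc : ∀ s ∈ I, ψ s = c) (hc1 : |c| < 1)
    (ε : ℝ) (hε : ε = 1 ∨ ε = -1) (θ : ℝ)
    (hεθ : c = ε * Real.tanh θ)
    (d : ℝ → Fin 3 → ℝ)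
    (hd : d = fun s =>
      (ε * (τg s / Real.sqrt (kn s ^ 2 + τg s ^ 2)) * Real.cosh θ) • T s
        - (ε * (kn s / Real.sqrt (kn s ^ 2 + τg s ^ 2)) * Real.cosh θ) • B s
        - Real.sinh θ • N s) :
    (∀ s ∈ I, HasDerivAt d (0 : Fin 3 → ℝ) s) ∧
    (∀ s ∈ I, ∀ t ∈ I, d s = d t) ∧
    (∀ s ∈ I, mdot (d s) (d s) = 1) ∧
    (∀ s ∈ I, mdot (N s) (d s) = Real.sinh θ) := by
  subst hI
  have hIo : IsOpen (Set.Ioo a b) := isOpen_Ioo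
  have key : ∀ s ∈ Set.Ioo a b, HasDerivAt d (0 : Fin 3 → ℝ) s := by
    subst hd
    intro s hs
    have hK : HasDerivAt kn (deriv kn s) s :=
      ((hkns.contDiffAt (hIo.mem_nhds hs)).differentiableAt (by simp)).hasDerivAt
    have hTg : HasDerivAt τg (deriv τg s) s :=
      ((hτgs.contDiffAt (hIo.mem_nhds hs)).differentiableAt (by simp)).hasDerivAt
    set K := kn s with hKdef
    set Tg := τg s with hTgdef
    set G := kg s with hGdef
    set K' := deriv kn s
    set Tg' := deriv τg s
    have hK0 : K ≠ 0 := hkn0 s hs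
    have hpos : 0 < K ^ 2 + Tg ^ 2 := by positivity
    set r := Real.sqrt (K ^ 2 + Tg ^ 2) with hrdef
    have hrpos : 0 < r := Real.sqrt_pos.2 hpos
    have hr0 : r ≠ 0 := ne_of_gt hrpos
    have hr2 : r ^ 2 = K ^ 2 + Tg ^ 2 := Real.sq_sqrt hpos.le
    have hCpos : 0 < Real.cosh θ := Real.cosh_pos θ
    -- deriv of τg/kn
    have hDq : deriv (fun u => τg u / kn u) s = (Tg' * K - Tg * K') / K ^ 2 :=
      (hTg.div hK hK0).deriv
    -- sqrt cube
    have hr3 : Real.sqrt ((K ^ 2 + Tg ^ 2) ^ 3) = r ^ 3 := by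
      rw [show (K ^ 2 + Tg ^ 2) ^ 3 = (r ^ 3) ^ 2 by rw [← hr2]; ring,
        Real.sqrt_sq (by positivity)]
    -- key scalar relation
    have hceq : c * r ^ 3 = K * Tg' - Tg * K' + G * r ^ 2 := by
      have h1 := (hc s hs).symm.trans (hψ s hs)
      rw [hDq, hr3, ← hKdef, ← hTgdef, ← hGdef, ← hrdef] at h1
      field_simp at h1
      have h2 : (c * r ^ 3) * (K ^ 2 * r) = (K * Tg' - Tg * K' + G * r ^ 2) * (K ^ 2 * r) := by
        linear_combination (K ^ 2 * r) * h1
      exact mul_right_cancel₀ (mul_ne_zero (pow_ne_zero 2 hK0) hr0) h2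
    -- sinh relation
    have hS : Real.sinh θ = ε * (c * Real.cosh θ) := by
      rw [hεθ, Real.tanh_eq_sinh_div_cosh]
      rcases hε with rfl | rfl <;> field_simp
    -- derivatives of the scalar coefficients
    have hsq : HasDerivAt (fun u => kn u ^ 2 + τg u ^ 2) (2 * K * K' + 2 * Tg * Tg') s := by
      have := ((hK.pow 2).add (hTg.pow 2))
      exact this.congr_deriv (by push_cast; ring)
    have hρ : HasDerivAt (fun u => Real.sqrt (kn u ^ 2 + τg u ^ 2))
        ((2 * K * K' + 2 * Tg * Tg') / (2 * r)) s := hsq.sqrt (ne_of_gt hpos)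
    have hf : HasDerivAt (fun u => ε * (τg u / Real.sqrt (kn u ^ 2 + τg u ^ 2)) * Real.cosh θ)
        (ε * ((Tg' * r - Tg * ((2 * K * K' + 2 * Tg * Tg') / (2 * r))) / r ^ 2) * Real.cosh θ) s :=
      ((hTg.div hρ hr0).const_mul ε).mul_const _
    have hg : HasDerivAt (fun u => ε * (kn u / Real.sqrt (kn u ^ 2 + τg u ^ 2)) * Real.cosh θ)
        (ε * ((K' * r - K * ((2 * K * K' + 2 * Tg * Tg') / (2 * r))) / r ^ 2) * Real.cosh θ) s :=
      ((hK.div hρ hr0).const_mul ε).mul_const _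
    have hD : HasDerivAt (fun u =>
        (ε * (τg u / Real.sqrt (kn u ^ 2 + τg u ^ 2)) * Real.cosh θ) • T u
          - (ε * (kn u / Real.sqrt (kn u ^ 2 + τg u ^ 2)) * Real.cosh θ) • B u
          - Real.sinh θ • N u)
        (((ε * (Tg / r) * Real.cosh θ) • (G • B s + K • N s)
            + (ε * ((Tg' * r - Tg * ((2 * K * K' + 2 * Tg * Tg') / (2 * r))) / r ^ 2) * Real.cosh θ) • T s)
          - ((ε * (K / r) * Real.cosh θ) • ((-G) • T s + Tg • N s)
            + (ε * ((K' * r - K * ((2 * K * K' + 2 * Tg * Tg') / (2 * r))) / r ^ 2) * Real.cosh θ) • B s)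
          - Real.sinh θ • (K • T s + Tg • B s)) s :=
      ((hf.smul (hT' s hs)).sub (hg.smul (hB' s hs))).sub ((hN' s hs).const_smul (Real.sinh θ))
    convert hD using 1
    rw [hS]
    rcases hε with rfl | rfl
    · match_scalars <;> field_simp
      · linear_combination (Real.cosh θ * Tg) * hceq + (Real.cosh θ * K') * hr2
      · ring
      · linear_combination (Real.cosh θ * K) * hceq + (-(Real.cosh θ * Tg')) * hr2
    · match_scalars <;> field_simp
      · linear_combination (-(Real.cosh θ * Tg)) * hceq + (-(Real.cosh θ * K')) * hr2
      · ring
      · linear_combination (-(Real.cosh θ * K)) * hceq + (Real.cosh θ * Tg') * hr2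

  refine ⟨key, ?_, ?_, ?_⟩
  · -- constancy
    have hconv : Convex ℝ (Set.Ioo a b) := convex_Ioo a b
    intro s hs t ht
    refine hconv.is_const_of_fderivWithin_eq_zero
      (fun x hx => ((key x hx).differentiableAt).differentiableWithinAt) ?_ hs ht
    intro x hx
    rw [fderivWithin_of_isOpen hIo hx, (key x hx).hasFDerivAt.fderiv]
    ext y i
    simp
  · intro s hs
    have hK0 : kn s ≠ 0 := hkn0 s hs
    have hpos : 0 < kn s ^ 2 + τg s ^ 2 := by positivity
    have hr2 : Real.sqrt (kn s ^ 2 + τg s ^ 2) ^ 2 = kn s ^ 2 + τg s ^ 2 := Real.sq_sqrt hpos.le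
    have hr0 : Real.sqrt (kn s ^ 2 + τg s ^ 2) ≠ 0 := ne_of_gt (Real.sqrt_pos.2 hpos)
    have tTT := hTT s hs; have tBB := hBB s hs; have tNN := hNN s hs
    have tTB := hTB s hs; have tTN := hTN s hs; have tBN := hBN s hs
    have hcs : Real.cosh θ ^ 2 - Real.sinh θ ^ 2 = 1 := Real.cosh_sq_sub_sinh_sq θ
    simp only [mdot] at tTT tBB tNN tTB tTN tBN
    simp only [hd, mdot, Pi.sub_apply, Pi.smul_apply, smul_eq_mul]
    set r := Real.sqrt (kn s ^ 2 + τg s ^ 2)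
    set A := ε * (τg s / r) * Real.cosh θ with hA
    set Bc := ε * (kn s / r) * Real.cosh θ with hBc
    have hab2 : A ^ 2 + Bc ^ 2 = Real.cosh θ ^ 2 := by
      rw [hA, hBc]
      rcases hε with rfl | rfl <;> field_simp <;> linear_combination (-1 : ℝ) * hr2
    linear_combination A ^ 2 * tTT + Bc ^ 2 * tBB + Real.sinh θ ^ 2 * tNN
      + (-2 * A * Bc) * tTB + (-2 * A * Real.sinh θ) * tTN
      + (2 * Bc * Real.sinh θ) * tBN + hab2 + hcs
  · intro s hs
    have tNN := hNN s hs; have tTN := hTN s hs; have tBN := hBN s hs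
    simp only [mdot] at tNN tTN tBN
    simp only [hd, mdot, Pi.sub_apply, Pi.smul_apply, smul_eq_mul]
    linear_combination (ε * (τg s / Real.sqrt (kn s ^ 2 + τg s ^ 2)) * Real.cosh θ) * tTN
      - (ε * (kn s / Real.sqrt (kn s ^ 2 + τg s ^ 2)) * Real.cosh θ) * tBN
      - Real.sinh θ * tNN
end
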